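/- arXiv:2604.14461 — 4 statements merged into one kernel-verified Lean document; each statement's English description precedes it below -/
import Mathlib

section
/- Let Y be a finite linear order, F a finite subset of Y, and n ∈ ℕ. Then rk_Y(F) ≥ n if and only if every interval of F in Y has at least 2^n − 1 elements. -/
open Ordinal

/-- `RkGE α s` means that the rank of `s`, viewed as a linear order in its own right,
is at least `α`.  (`rk(s) ≥ β + 1` iff there is `c ∈ s` such that both
`{y ∈ s | y < c}` and `{y ∈ s | c < y}` have rank at least `β`; the clauses for `0`
and limit ordinals are folded into the single quantifier `∀ β < α`.) -/
def RkGE {Y : Type*} [LinearOrder Y] : Ordinal → Set Y → Prop :=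
  WellFounded.fix (C := fun _ => Set Y → Prop) Ordinal.lt_wf
    (fun α ih s => ∀ β, ∀ hβ : β < α,
      ∃ c ∈ s, ih β hβ {y ∈ s | y < c} ∧ ih β hβ {y ∈ s | c < y})

/-- `S` is a cut of the finite set `F`: a downward-closed (within `F`) subset of `F`.
For `F = {a_0 < … < a_{m-1}}` the cuts are exactly the `m + 1` lower segments of `F`,
and they index the `m + 1` intervals that `F` determines. -/
def IsCut {Y : Type*} [LinearOrder Y] (F S : Set Y) : Prop :=
  S ⊆ F ∧ ∀ a ∈ F, ∀ b ∈ S, a < b → a ∈ S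

/-- The interval of `Y` determined by the cut `S` of `F`: all points lying strictly above
every element of `S` and strictly below every element of `F \\ S`. -/
def cutInterval {Y : Type*} [LinearOrder Y] (F S : Set Y) : Set Y :=
  {y | (∀ a ∈ S, a < y) ∧ ∀ a ∈ F, a ∉ S → y < a}

/-- `RankGE α F` means `rk_Y(F) ≥ α` for a finite subset `F` of the linear order `Y`:
`rk_Y(F) ≥ β + 1` iff every interval determined by `F` contains a point `c` with
`rk_Y(F ∪ {c}) ≥ β` (the clauses for `0` and limits are folded into `∀ β < α`). -/
def RankGE {Y : Type*} [LinearOrder Y] : Ordinal → Set Y → Prop :=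
  WellFounded.fix (C := fun _ => Set Y → Prop) Ordinal.lt_wf
    (fun α ih F => ∀ β, ∀ hβ : β < α, ∀ S : Set Y, IsCut F S →
      ∃ c ∈ cutInterval F S, ih β hβ (insert c F))

universe v

section Aux
variable {Y : Type*} [LinearOrder Y]

theorem RankGE_iff (α : Ordinal) (F : Set Y) :
    RankGE α F ↔ ∀ β < α, ∀ S : Set Y, IsCut F S →
      ∃ c ∈ cutInterval F S, RankGE β (insert c F) := by
  unfold RankGE
  rw [WellFounded.fix_eq]

theorem RankGE_mono {α β : Ordinal} {F : Set Y} (h : β ≤ α) (hF : RankGE α F) :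
    RankGE β F := by
  rw [RankGE_iff] at *
  exact fun γ hγ => hF γ (hγ.trans_le h)

theorem RankGE_succ (n : ℕ) (F : Set Y) :
    RankGE ((n + 1 : ℕ) : Ordinal.{v}) F ↔ ∀ S : Set Y, IsCut F S →
      ∃ c ∈ cutInterval F S, RankGE ((n : ℕ) : Ordinal.{v}) (insert c F) := by
  rw [RankGE_iff]
  constructor
  · intro h S hS
    have hlt : ((n : ℕ) : Ordinal.{v}) < ((n + 1 : ℕ) : Ordinal.{v}) := by
      exact_mod_cast Nat.lt_succ_self n
    exact h n hlt S hS
  · intro h β hβ S hS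
    obtain ⟨c, hc, hr⟩ := h S hS
    have hle : β ≤ ((n : ℕ) : Ordinal.{v}) := by
      have : β < ((n : ℕ) : Ordinal.{v}) + 1 := by push_cast at hβ; exact hβ
      rwa [Ordinal.add_one_eq_succ, Order.lt_succ_iff] at this
    exact ⟨c, hc, RankGE_mono hle hr⟩

/-- cuts form a chain -/
theorem cut_chain {F S T : Set Y} (hS : IsCut F S) (hT : IsCut F T) :
    S ⊆ T ∨ T ⊆ S := by
  by_contra h
  push_neg at h
  rw [Set.not_subset, Set.not_subset] at h
  obtain ⟨⟨a, haS, haT⟩, b, hbT, hbS⟩ := h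
  rcases lt_trichotomy a b with hab | hab | hab
  · exact haT (hT.2 a (hS.1 haS) b hbT hab)
  · exact haT (hab ▸ hbT)
  · exact hbS (hS.2 b (hT.1 hbT) a haS hab)

variable {F S : Set Y} {c : Y}

theorem not_mem_of_mem_cutInterval (hc : c ∈ cutInterval F S) (hS : IsCut F S) :
    c ∉ F := by
  intro h
  by_cases hcS : c ∈ S
  · exact lt_irrefl c (hc.1 c hcS)
  · exact lt_irrefl c (hc.2 c h hcS)

theorem mem_S_of_lt (hc : c ∈ cutInterval F S) {a : Y} (haF : a ∈ F) (h : a < c) :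
    a ∈ S := by
  by_contra hnS
  exact absurd (hc.2 a haF hnS) (not_lt.2 h.le)

theorem isCut_insert_left (hS : IsCut F S) (hc : c ∈ cutInterval F S) :
    IsCut (insert c F) S := by
  refine ⟨fun x hx => Set.mem_insert_iff.2 (Or.inr (hS.1 hx)), ?_⟩
  rintro a (rfl | haF) b hbS hab
  · exact absurd (hc.1 b hbS) (not_lt.2 hab.le)
  · exact hS.2 a haF b hbS hab

theorem cutInterval_insert_left (hS : IsCut F S) (hc : c ∈ cutInterval F S) :
    cutInterval (insert c F) S = {y ∈ cutInterval F S | y < c} := by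
  have hcF := not_mem_of_mem_cutInterval hc hS
  ext y
  constructor
  · intro h
    refine ⟨⟨h.1, fun a haF hanS => h.2 a (Or.inr haF) hanS⟩,
      h.2 c (Or.inl rfl) (fun hcS => hcF (hS.1 hcS))⟩
  · rintro ⟨h, hyc⟩
    refine ⟨h.1, ?_⟩
    rintro a (rfl | haF) hanS
    · exact hyc
    · exact h.2 a haF hanS

theorem isCut_insert_right (hS : IsCut F S) (hc : c ∈ cutInterval F S) :
    IsCut (insert c F) (insert c S) := by
  refine ⟨fun x hx => ?_, ?_⟩
  · rcases hx with rfl | hx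
    · exact Set.mem_insert _ _
    · exact Set.mem_insert_iff.2 (Or.inr (hS.1 hx))
  · rintro a (rfl | haF) b (rfl | hbS) hab
    · exact absurd hab (lt_irrefl _)
    · exact absurd (hc.1 b hbS) (not_lt.2 hab.le)
    · exact Set.mem_insert_iff.2 (Or.inr (mem_S_of_lt hc haF hab))
    · exact Set.mem_insert_iff.2 (Or.inr (hS.2 a haF b hbS hab))

theorem cutInterval_insert_right (hS : IsCut F S) (hc : c ∈ cutInterval F S) :
    cutInterval (insert c F) (insert c S) = {y ∈ cutInterval F S | c < y} := by
  have hcF := not_mem_of_mem_cutInterval hc hS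
  ext y
  constructor
  · intro h
    have hcy : c < y := h.1 c (Set.mem_insert _ _)
    refine ⟨⟨fun a ha => h.1 a (Set.mem_insert_iff.2 (Or.inr ha)), ?_⟩, hcy⟩
    intro a haF hanS
    refine h.2 a (Or.inr haF) ?_
    rintro (rfl | haS)
    · exact hcF haF
    · exact hanS haS
  · rintro ⟨h, hcy⟩
    constructor
    · rintro a (rfl | haS)
      · exact hcy
      · exact h.1 a haS
    · rintro a (rfl | haF) hanS
      · exact absurd (Set.mem_insert _ _) hanS
      · exact h.2 a haF (fun haS => hanS (Set.mem_insert_iff.2 (Or.inr haS)))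

/-- classification of cuts of `insert c F` that don't come from `S` -/
theorem cutInterval_insert_of_ne (hS : IsCut F S) (hc : c ∈ cutInterval F S)
    {T : Set Y} (hT : IsCut (insert c F) T) (hne : T \ {c} ≠ S) :
    cutInterval (insert c F) T = cutInterval F (T \ {c}) := by
  have hcF := not_mem_of_mem_cutInterval hc hS
  set T₀ := T \ {c} with hT₀
  have hT₀cut : IsCut F T₀ := by
    constructor
    · intro x hx
      rcases hT.1 hx.1 with rfl | h
      · exact absurd rfl hx.2
      · exact h
    · intro a haF b hb hab
      refine ⟨hT.2 a (Or.inr haF) b hb.1 hab, ?_⟩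
      rintro rfl; exact hcF haF
  rcases cut_chain hS hT₀cut with hsub | hsub
  · -- S ⊊ T₀ : there is b ∈ T₀ \ S, b ∈ F, c < b; then c ∈ T
    obtain ⟨b, hbT₀, hbS⟩ : ∃ b, b ∈ T₀ ∧ b ∉ S := by
      by_contra h
      push_neg at h
      exact hne (Set.Subset.antisymm h hsub)
    have hbF : b ∈ F := hT₀cut.1 hbT₀
    have hcb : c < b := hc.2 b hbF hbS
    have hcT : c ∈ T := hT.2 c (Set.mem_insert _ _) b hbT₀.1 hcb
    ext y
    constructor
    · intro h
      refine ⟨fun a ha => h.1 a ha.1, fun a haF hanT₀ => ?_⟩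
      refine h.2 a (Or.inr haF) (fun haT => hanT₀ ⟨haT, ?_⟩)
      rintro rfl; exact hcF haF
    · intro h
      constructor
      · intro a haT
        by_cases hac : a = c
        · subst hac; exact hcb.trans (h.1 b hbT₀)
        · exact h.1 a ⟨haT, hac⟩
      · rintro a (rfl | haF) hanT
        · exact absurd hcT hanT
        · exact h.2 a haF (fun haT₀ => hanT haT₀.1)
  · -- T₀ ⊊ S : there is b ∈ S \ T₀, b < c; then c ∉ T
    obtain ⟨b, hbS, hbT₀⟩ : ∃ b, b ∈ S ∧ b ∉ T₀ := by
      by_contra h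
      push_neg at h
      exact hne (Set.Subset.antisymm hsub h)
    have hbF : b ∈ F := hS.1 hbS
    have hbc : b < c := hc.1 b hbS
    have hcT : c ∉ T := by
      intro hcT
      exact hbT₀ ⟨hT.2 b (Or.inr hbF) c hcT hbc, fun hb => absurd (hb ▸ hbc) (lt_irrefl _)⟩
    have hTT₀ : T = T₀ := by
      ext x; constructor
      · intro hx; exact ⟨hx, fun h => hcT (h ▸ hx)⟩
      · exact fun hx => hx.1
    ext y
    constructor
    · intro h
      exact ⟨fun a ha => h.1 a (hTT₀ ▸ ha), fun a haF hanT₀ =>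
        h.2 a (Or.inr haF) (fun haT => hanT₀ (hTT₀ ▸ haT))⟩
    · intro h
      constructor
      · intro a haT; exact h.1 a (hTT₀ ▸ haT)
      · rintro a (rfl | haF) hanT
        · exact (h.2 b hbF hbT₀).trans hbc
        · exact h.2 a haF (fun h' => hanT (hTT₀ ▸ h'))

/-- median element -/
theorem exists_median (I : Set Y) (hI : I.Finite) (k : ℕ) (h : 2 * k + 1 ≤ I.ncard) :
    ∃ c ∈ I, k ≤ {y ∈ I | y < c}.ncard ∧ k ≤ {y ∈ I | c < y}.ncard := by
  classical
  set s := hI.toFinset with hs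
  have hIs : I = ↑s := by simp [hs]
  have hcard : s.card = I.ncard := (Set.ncard_eq_toFinset_card I hI).symm
  have hk : k < s.card := by omega
  set f := s.orderEmbOfFin rfl with hf
  set c := f ⟨k, hk⟩ with hc
  have hmemf : ∀ i, f i ∈ s := fun i => s.orderEmbOfFin_mem rfl i
  refine ⟨c, by rw [hIs]; exact_mod_cast hmemf _, ?_, ?_⟩
  · have hsub : {y ∈ I | y < c} = ↑(s.filter (· < c)) := by
      ext y
      simp only [Set.mem_setOf_eq, Finset.coe_filter, hIs, Finset.mem_coe]
    rw [hsub, Set.ncard_coe_finset]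
    have hmap : ∀ i ∈ (Finset.univ : Finset (Fin k)),
        f (Fin.castLE hk.le i) ∈ s.filter (· < c) := by
      intro i _
      refine Finset.mem_filter.2 ⟨hmemf _, f.strictMono ?_⟩
      simpa [Fin.lt_def] using i.isLt
    have hinj : Set.InjOn (fun i : Fin k => f (Fin.castLE hk.le i))
        ↑(Finset.univ : Finset (Fin k)) := fun i _ j _ hij =>
      Fin.castLE_injective _ (f.injective hij)
    have := Finset.card_le_card_of_injOn _ hmap hinj
    simpa using this
  · have hsub : {y ∈ I | c < y} = ↑(s.filter (c < ·)) := by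
      ext y
      simp only [Set.mem_setOf_eq, Finset.coe_filter, hIs, Finset.mem_coe]
    rw [hsub, Set.ncard_coe_finset]
    have hmap : ∀ i ∈ (Finset.univ : Finset (Fin k)),
        f ⟨k + 1 + i.val, by have := i.isLt; omega⟩ ∈ s.filter (c < ·) := by
      intro i _
      refine Finset.mem_filter.2 ⟨hmemf _, f.strictMono ?_⟩
      simp only [Fin.lt_def]
      omega
    have hinj : Set.InjOn (fun i : Fin k => f ⟨k + 1 + i.val, by have := i.isLt; omega⟩)
        ↑(Finset.univ : Finset (Fin k)) := by
      intro i _ j _ hij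
      have := f.injective hij
      have := congrArg Fin.val this
      simp only at this
      exact Fin.ext (by omega)
    have := Finset.card_le_card_of_injOn _ hmap hinj
    simpa using this

theorem two_mul_add_one_le_ncard {I : Set Y} (hI : I.Finite) {c : Y} (hc : c ∈ I) {k : ℕ}
    (h1 : k ≤ {y ∈ I | y < c}.ncard) (h2 : k ≤ {y ∈ I | c < y}.ncard) :
    2 * k + 1 ≤ I.ncard := by
  set A := {y ∈ I | y < c} with hA'
  set B := {y ∈ I | c < y} with hB'
  have hA : A.Finite := hI.subset (Set.sep_subset _ _)
  have hB : B.Finite := hI.subset (Set.sep_subset _ _)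
  have hdisj : Disjoint A B := by
    rw [Set.disjoint_left]
    rintro y ⟨_, hy1⟩ ⟨_, hy2⟩
    exact absurd (hy1.trans hy2) (lt_irrefl _)
  have hcAB : c ∉ A ∪ B := by
    rintro (⟨_, h⟩ | ⟨_, h⟩) <;> exact lt_irrefl _ h
  have hsub : insert c (A ∪ B) ⊆ I := by
    rintro y (rfl | (hy | hy))
    exacts [hc, hy.1, hy.1]
  calc 2 * k + 1 ≤ A.ncard + B.ncard + 1 := by omega
    _ = (A ∪ B).ncard + 1 := by rw [Set.ncard_union_eq hdisj hA hB]
    _ = (insert c (A ∪ B)).ncard := (Set.ncard_insert_of_notMem hcAB (hA.union hB)).symm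
    _ ≤ I.ncard := Set.ncard_le_ncard hsub hI

theorem isCut_sdiff {T : Set Y} (hS : IsCut F S) (hc : c ∈ cutInterval F S)
    (hT : IsCut (insert c F) T) : IsCut F (T \ {c}) := by
  have hcF := not_mem_of_mem_cutInterval hc hS
  constructor
  · intro x hx
    rcases hT.1 hx.1 with rfl | h
    · exact absurd rfl hx.2
    · exact h
  · intro a haF b hb hab
    refine ⟨hT.2 a (Or.inr haF) b hb.1 hab, ?_⟩
    rintro rfl; exact hcF haF
end Aux

/-- **Interval Size Lemma** (Lemma 5.4): for a finite linear order `Y`, a subset `F ⊆ Y`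
and `n ∈ ℕ`, `rk_Y(F) ≥ n` iff every interval of `F` in `Y` has at least `2 ^ n - 1`
elements. -/
theorem rank_ge_iff_intervals_large {Y : Type*} [LinearOrder Y] [Finite Y]
    (F : Set Y) (n : ℕ) :
    RankGE (n : Ordinal) F ↔
      ∀ S : Set Y, IsCut F S → 2 ^ n - 1 ≤ (cutInterval F S).ncard := by
  induction n generalizing F with
  | zero =>
    constructor
    · intro _ S _
      simp
    · intro _
      rw [Nat.cast_zero, RankGE_iff]
      intro β hβ
      exact absurd hβ (not_lt_of_ge (zero_le (a := β)))
  | succ n ih =>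
    have hpow : 1 ≤ 2 ^ n := Nat.one_le_two_pow
    have hpow' : 2 ^ (n + 1) - 1 = 2 * (2 ^ n - 1) + 1 := by
      rw [pow_succ]; omega
    rw [RankGE_succ]
    constructor
    · intro h S hS
      obtain ⟨c, hc, hr⟩ := h S hS
      have hlow := (ih (insert c F)).mp hr S (isCut_insert_left hS hc)
      rw [cutInterval_insert_left hS hc] at hlow
      have hhigh := (ih (insert c F)).mp hr (insert c S) (isCut_insert_right hS hc)
      rw [cutInterval_insert_right hS hc] at hhigh
      rw [hpow']
      exact two_mul_add_one_le_ncard (Set.toFinite _) hc hlow hhigh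
    · intro h S hS
      have hI := h S hS
      rw [hpow'] at hI
      obtain ⟨c, hcI, h1, h2⟩ := exists_median (cutInterval F S) (Set.toFinite _) _ hI
      refine ⟨c, hcI, (ih (insert c F)).mpr ?_⟩
      intro T hT
      by_cases hTe : T \ {c} = S
      · by_cases hcT : c ∈ T
        · have hTS : T = insert c S := by
            ext x
            constructor
            · intro hx
              by_cases hxc : x = c
              · exact hxc ▸ Set.mem_insert _ _
              · exact Set.mem_insert_iff.2 (Or.inr (hTe ▸ ⟨hx, hxc⟩))
            · rintro (rfl | hx)
              · exact hcT
              · exact (hTe ▸ hx : x ∈ T \ {c}).1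
          rw [hTS, cutInterval_insert_right hS hcI]
          exact h2
        · have hTS : T = S := by
            ext x
            constructor
            · intro hx
              refine hTe ▸ ⟨hx, ?_⟩
              rintro rfl; exact hcT hx
            · intro hx
              exact (hTe ▸ hx : x ∈ T \ {c}).1
          rw [hTS, cutInterval_insert_left hS hcI]
          exact h1
      · rw [cutInterval_insert_of_ne hS hcI hT hTe]
        have := h (T \ {c}) (isCut_sdiff hS hcI hT)
        omega
end

section
/- Let Y be a countable linear order, γ a limit ordinal or 0, and n ∈ ℕ. If rk(Y) ≥ γ + n, then there exist elements s_1 < s_2 < … < s_{2^n − 1} in Y such that all 2^n intervals determined by {s_1, …, s_{2^n − 1}} in Y have rank ≥ γ. -/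
open Ordinal

lemma rkGE_iff {Y : Type*} [LinearOrder Y] (α : Ordinal) (s : Set Y) :
    RkGE α s ↔ ∀ β < α,
      ∃ c ∈ s, RkGE β {y ∈ s | y < c} ∧ RkGE β {y ∈ s | c < y} := by
  unfold RkGE
  rw [WellFounded.fix_eq]

lemma key_lemma {Y : Type*} [LinearOrder Y] (γ : Ordinal) :
    ∀ n : ℕ, ∀ A : Set Y, RkGE (γ + n) A →
      ∃ F : Finset Y, F.card = 2 ^ n - 1 ∧ ↑F ⊆ A ∧
        ∀ S : Set Y, IsCut (↑F) S → RkGE γ (A ∩ cutInterval (↑F) S) := by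
  intro n
  induction n with
  | zero =>
    intro A hA
    refine ⟨∅, by simp, by simp, ?_⟩
    intro S hS
    have hS0 : S = ∅ := Set.subset_eq_empty (by simpa using hS.1) rfl
    have hEq : A ∩ cutInterval (↑(∅ : Finset Y)) S = A := by
      ext y; simp [cutInterval, hS0]
    rw [hEq]
    simpa using hA
  | succ n ih =>
    intro A hA
    rw [rkGE_iff] at hA
    obtain ⟨c, hcA, hlt, hgt⟩ := hA (γ + n) (by
      have : ((n : Ordinal)) < ((n + 1 : ℕ) : Ordinal) := by
        exact_mod_cast Nat.lt_succ_self n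
      exact (add_lt_add_iff_left γ).mpr this)
    obtain ⟨F₁, hF₁card, hF₁sub, hF₁⟩ := ih _ hlt
    obtain ⟨F₂, hF₂card, hF₂sub, hF₂⟩ := ih _ hgt
    have hF₁lt : ∀ a ∈ F₁, a < c := fun a ha => (hF₁sub ha).2
    have hF₂gt : ∀ a ∈ F₂, c < a := fun a ha => (hF₂sub ha).2
    refine ⟨insert c (F₁ ∪ F₂), ?_, ?_, ?_⟩
    · have hdisj : Disjoint F₁ F₂ := by
        rw [Finset.disjoint_left]
        intro a h1 h2
        exact absurd (hF₁lt a h1) (not_lt.mpr (le_of_lt (hF₂gt a h2)))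
      have hc1 : c ∉ F₁ ∪ F₂ := by
        simp only [Finset.mem_union]
        rintro (h | h)
        · exact absurd (hF₁lt c h) (lt_irrefl c)
        · exact absurd (hF₂gt c h) (lt_irrefl c)
      rw [Finset.card_insert_of_notMem hc1, Finset.card_union_of_disjoint hdisj,
        hF₁card, hF₂card]
      have h1 : 1 ≤ 2 ^ n := Nat.one_le_two_pow
      have h2 : 2 ^ (n + 1) = 2 * 2 ^ n := by ring
      omega
    · intro a ha
      simp only [Finset.coe_insert, Set.mem_insert_iff, Finset.coe_union,
        Set.mem_union] at ha
      rcases ha with rfl | h | h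
      · exact hcA
      · exact (hF₁sub h).1
      · exact (hF₂sub h).1
    · intro S hS
      have hmem : ∀ a, a ∈ (↑(insert c (F₁ ∪ F₂)) : Set Y) ↔
          a = c ∨ a ∈ F₁ ∨ a ∈ F₂ := by
        intro a; simp
      by_cases hcS : c ∈ S
      · -- everything in F₁ is in S; pass to the right part
        have hF₁S : ∀ a ∈ F₁, a ∈ S := fun a ha =>
          hS.2 a ((hmem a).mpr (Or.inr (Or.inl ha))) c hcS (hF₁lt a ha)
        have hcut : IsCut (↑F₂) (S ∩ ↑F₂) := by
          constructor
          · exact Set.inter_subset_right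
          · intro a ha b hb hab
            exact ⟨hS.2 a ((hmem a).mpr (Or.inr (Or.inr ha))) b hb.1 hab, ha⟩
        have hEq : A ∩ cutInterval (↑(insert c (F₁ ∪ F₂))) S =
            {y ∈ A | c < y} ∩ cutInterval (↑F₂) (S ∩ ↑F₂) := by
          ext y
          simp only [Set.mem_inter_iff, Set.mem_setOf_eq, cutInterval]
          constructor
          · rintro ⟨hyA, h1, h2⟩
            refine ⟨⟨hyA, h1 c hcS⟩, fun a ha => h1 a ha.1, fun a ha haS => ?_⟩
            exact h2 a ((hmem a).mpr (Or.inr (Or.inr ha))) (fun h' => haS ⟨h', ha⟩)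
          · rintro ⟨⟨hyA, hcy⟩, h1, h2⟩
            refine ⟨hyA, fun a haS => ?_, fun a haF haS => ?_⟩
            · rcases (hmem a).mp (hS.1 haS) with rfl | h | h
              · exact hcy
              · exact lt_trans (hF₁lt a h) hcy
              · exact h1 a ⟨haS, h⟩
            · rcases (hmem a).mp haF with rfl | h | h
              · exact absurd hcS haS
              · exact absurd (hF₁S a h) haS
              · exact h2 a h (fun h' => haS h'.1)
        rw [hEq]
        exact hF₂ _ hcut
      · -- S ⊆ F₁; pass to the left part
        have hSF₁ : S ⊆ ↑F₁ := by
          intro b hb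
          rcases (hmem b).mp (hS.1 hb) with rfl | h | h
          · exact absurd hb hcS
          · exact h
          · exact absurd (hS.2 c ((hmem c).mpr (Or.inl rfl)) b hb (hF₂gt b h)) hcS
        have hcut : IsCut (↑F₁) S := by
          refine ⟨hSF₁, fun a ha b hb hab => ?_⟩
          exact hS.2 a ((hmem a).mpr (Or.inr (Or.inl ha))) b hb hab
        have hEq : A ∩ cutInterval (↑(insert c (F₁ ∪ F₂))) S =
            {y ∈ A | y < c} ∩ cutInterval (↑F₁) S := by
          ext y
          simp only [Set.mem_inter_iff, Set.mem_setOf_eq, cutInterval]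
          constructor
          · rintro ⟨hyA, h1, h2⟩
            exact ⟨⟨hyA, h2 c ((hmem c).mpr (Or.inl rfl)) hcS⟩, h1,
              fun a ha haS => h2 a ((hmem a).mpr (Or.inr (Or.inl ha))) haS⟩
          · rintro ⟨⟨hyA, hyc⟩, h1, h2⟩
            refine ⟨hyA, h1, fun a haF haS => ?_⟩
            rcases (hmem a).mp haF with rfl | h | h
            · exact hyc
            · exact h2 a h haS
            · exact lt_trans hyc (hF₂gt a h)
        rw [hEq]
        exact hF₁ _ hcut


/-- **γ-level Interval Bound** (Corollary 5.8): if `γ` is a limit ordinal or `0`, `n ∈ ℕ`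
and `rk(Y) ≥ γ + n`, then there are `s_1 < … < s_{2^n - 1}` in `Y` all of whose `2 ^ n`
intervals have rank `≥ γ`. -/
theorem gamma_level_interval_bound {Y : Type*} [LinearOrder Y] [Countable Y]
    (γ : Ordinal) (hγ : γ = 0 ∨ Order.IsSuccLimit γ) (n : ℕ)
    (h : RkGE (γ + n) (Set.univ : Set Y)) :
    ∃ s : Fin (2 ^ n - 1) → Y, StrictMono s ∧
      ∀ S : Set Y, IsCut (Set.range s) S → RkGE γ (cutInterval (Set.range s) S) := by
  obtain ⟨F, hcard, -, hF⟩ := key_lemma γ n Set.univ h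
  let e := F.orderIsoOfFin hcard
  refine ⟨fun i => (e i : Y), fun i j hij => ?_, ?_⟩
  · exact_mod_cast e.strictMono hij
  · have hrange : Set.range (fun i => (e i : Y)) = ↑F := by
      ext y
      constructor
      · rintro ⟨i, rfl⟩; exact (e i).2
      · intro hy; exact ⟨e.symm ⟨y, hy⟩, by simp⟩
    rw [hrange]
    intro S hS
    have := hF S hS
    rwa [Set.univ_inter] at this
end

section
/- For every countable ordinal α there exists a countable linear order Y with rk(Y) = α. Explicitly: for finite α = n, any finite linear order of size 2^n − 1 has rank n; and for α ≥ ω, writing α = ω·β + n with β ≥ 1 and n < ω, the ordinal ω^β · 2^n has rank exactly α. -/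
open Ordinal

namespace RankProof

theorem RkGE_def {Y : Type*} [LinearOrder Y] (α : Ordinal) (s : Set Y) :
    RkGE α s ↔ ∀ β < α, ∃ c ∈ s, RkGE β {y ∈ s | y < c} ∧ RkGE β {y ∈ s | c < y} := by
  rw [RkGE, WellFounded.fix_eq]

theorem RkGE_down {Y : Type*} [LinearOrder Y] {α β : Ordinal} {s : Set Y}
    (h : β ≤ α) (hα : RkGE α s) : RkGE β s := by
  rw [RkGE_def] at hα ⊢
  exact fun γ hγ => hα γ (hγ.trans_le h)

/-- Rank is invariant under order-embeddings (comparing a set with its image). -/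
theorem RkGE_image {Y Z : Type*} [LinearOrder Y] [LinearOrder Z] (f : Y ↪o Z) :
    ∀ {α : Ordinal} {s : Set Y}, RkGE α (f '' s) ↔ RkGE α s := by
  have keylt : ∀ (s : Set Y) (a : Y), f '' {y ∈ s | y < a} = {z ∈ f '' s | z < f a} := by
    intro s a; ext z
    simp only [Set.mem_image, Set.mem_setOf_eq]
    constructor
    · rintro ⟨y, ⟨hy, hlt⟩, rfl⟩; exact ⟨⟨y, hy, rfl⟩, f.strictMono hlt⟩
    · rintro ⟨⟨y, hy, rfl⟩, hlt⟩; exact ⟨y, ⟨hy, f.lt_iff_lt.mp hlt⟩, rfl⟩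
  have keygt : ∀ (s : Set Y) (a : Y), f '' {y ∈ s | a < y} = {z ∈ f '' s | f a < z} := by
    intro s a; ext z
    simp only [Set.mem_image, Set.mem_setOf_eq]
    constructor
    · rintro ⟨y, ⟨hy, hlt⟩, rfl⟩; exact ⟨⟨y, hy, rfl⟩, f.strictMono hlt⟩
    · rintro ⟨⟨y, hy, rfl⟩, hlt⟩; exact ⟨y, ⟨hy, f.lt_iff_lt.mp hlt⟩, rfl⟩
  intro α
  induction α using Ordinal.induction with
  | _ α IH =>
    intro s
    rw [RkGE_def, RkGE_def]
    constructor
    · intro h β hβ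
      obtain ⟨c, hc, h1, h2⟩ := h β hβ
      obtain ⟨a, ha, rfl⟩ := hc
      rw [← keylt] at h1
      rw [← keygt] at h2
      exact ⟨a, ha, (IH β hβ).mp h1, (IH β hβ).mp h2⟩
    · intro h β hβ
      obtain ⟨a, ha, h1, h2⟩ := h β hβ
      refine ⟨f a, ⟨a, ha, rfl⟩, ?_, ?_⟩
      · rw [← keylt]; exact (IH β hβ).mpr h1
      · rw [← keygt]; exact (IH β hβ).mpr h2

/-- Rank transfers along order isomorphisms. -/
theorem RkGE_congr {Y Z : Type*} [LinearOrder Y] [LinearOrder Z] (e : Y ≃o Z)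
    {α : Ordinal} : RkGE α (Set.univ : Set Y) ↔ RkGE α (Set.univ : Set Z) := by
  rw [← RkGE_image e.toOrderEmbedding (α := α) (s := Set.univ)]
  rw [Set.image_univ]
  have : Set.range e.toOrderEmbedding = Set.univ := e.surjective.range_eq
  rw [this]

/-- The rank predicate for ordinals: `P α δ` iff the linear order `δ` has rank `≥ α`. -/
def P : Ordinal.{u} → Ordinal.{u} → Prop :=
  WellFounded.fix (C := fun _ => Ordinal → Prop) Ordinal.lt_wf
    (fun α ih δ => ∀ β, ∀ hβ : β < α, ∃ c < δ, ih β hβ c ∧ ih β hβ (δ - (c + 1)))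

universe u

theorem P_def (α δ : Ordinal.{u}) :
    P α δ ↔ ∀ β < α, ∃ c < δ, P β c ∧ P β (δ - (c + 1)) := by
  rw [P, WellFounded.fix_eq]

theorem P_zero (δ : Ordinal) : P 0 δ := by
  rw [P_def]; intro β hβ; exact absurd hβ not_lt_zero

theorem P_down {α β δ : Ordinal} (h : β ≤ α) (hα : P α δ) : P β δ := by
  rw [P_def] at hα ⊢
  exact fun γ hγ => hα γ (hγ.trans_le h)

theorem P_mono : ∀ {α δ δ' : Ordinal}, δ ≤ δ' → P α δ → P α δ' := by
  intro α
  induction α using Ordinal.induction with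
  | _ α IH =>
    intro δ δ' hδ h
    rw [P_def] at h ⊢
    intro β hβ
    obtain ⟨c, hc, h1, h2⟩ := h β hβ
    refine ⟨c, hc.trans_le hδ, h1, IH β hβ ?_ h2⟩
    exact Ordinal.sub_le.2 (hδ.trans (Ordinal.le_add_sub δ' (c+1)))

theorem P_succ {α δ δ' : Ordinal} (h : P α δ) (h' : P α δ') : P (α + 1) (δ + 1 + δ') := by
  rw [P_def]
  intro β hβ
  rw [Ordinal.add_one_eq_succ, Order.lt_succ_iff] at hβ
  refine ⟨δ, (lt_add_one δ).trans_le le_self_add, P_down hβ h, ?_⟩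
  rw [Ordinal.add_sub_cancel]
  exact P_down hβ h'

theorem P_nat : ∀ n : ℕ, P n ((2 ^ n - 1 : ℕ) : Ordinal) := by
  intro n
  induction n with
  | zero => exact P_zero _
  | succ n ih =>
    have h := P_succ ih ih
    have e1 : ((2 ^ n - 1 : ℕ) : Ordinal) + 1 + ((2 ^ n - 1 : ℕ) : Ordinal)
        = ((2 ^ (n+1) - 1 : ℕ) : Ordinal) := by
      have h2 : 1 ≤ 2 ^ n := Nat.one_le_two_pow
      norm_cast
      omega
    have e2 : ((n : Ordinal) + 1) = ((n + 1 : ℕ) : Ordinal) := by norm_cast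
    rwa [e1, e2] at h

/-- The inclusion of an initial segment. -/
noncomputable def embIio {δ : Ordinal} (c : ↥(Set.Iio δ)) : ↥(Set.Iio c.1) ↪o ↥(Set.Iio δ) :=
  OrderEmbedding.ofStrictMono
    (fun x => ⟨x.1, Set.mem_Iio.2 ((Set.mem_Iio.1 x.2).trans (Set.mem_Iio.1 c.2))⟩)
    (fun a b h => Subtype.mk_lt_mk.2 (Subtype.coe_lt_coe.2 h))

theorem range_embIio {δ : Ordinal} (c : ↥(Set.Iio δ)) :
    Set.range (embIio c) = {y : ↥(Set.Iio δ) | y ∈ Set.univ ∧ y < c} := by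
  ext y
  simp only [Set.mem_range, Set.mem_setOf_eq, Set.mem_univ, true_and]
  constructor
  · rintro ⟨x, rfl⟩
    exact Subtype.mk_lt_mk.2 (Set.mem_Iio.1 x.2)
  · intro h
    refine ⟨⟨y.1, Set.mem_Iio.2 (Subtype.coe_lt_coe.2 h)⟩, ?_⟩
    apply Subtype.ext
    rfl

/-- The order-embedding of `Iio (δ - (c+1))` onto the final segment above `c`. -/
noncomputable def embUpper {δ : Ordinal} (c : ↥(Set.Iio δ)) :
    ↥(Set.Iio (δ - (c.1 + 1))) ↪o ↥(Set.Iio δ) :=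
  OrderEmbedding.ofStrictMono (fun x => ⟨c.1 + 1 + x.1, Ordinal.lt_sub.1 x.2⟩)
    (fun a b h => Subtype.mk_lt_mk.2 (add_lt_add_right (Subtype.coe_lt_coe.2 h) _))

theorem range_embUpper {δ : Ordinal} (c : ↥(Set.Iio δ)) :
    Set.range (embUpper c) = {y : ↥(Set.Iio δ) | y ∈ Set.univ ∧ c < y} := by
  ext y
  simp only [Set.mem_range, Set.mem_setOf_eq, Set.mem_univ, true_and]
  constructor
  · rintro ⟨x, rfl⟩
    refine Subtype.mk_lt_mk.2 ?_
    calc c.1 < c.1 + 1 := lt_add_one _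
      _ ≤ c.1 + 1 + x.1 := le_self_add
  · intro h
    have hcy : c.1 + 1 ≤ y.1 := by
      rw [Ordinal.add_one_eq_succ]
      exact Order.succ_le_of_lt (Subtype.coe_lt_coe.2 h)
    refine ⟨⟨y.1 - (c.1 + 1), ?_⟩, ?_⟩
    · refine Set.mem_Iio.2 ?_
      rw [Ordinal.lt_sub, Ordinal.add_sub_cancel_of_le hcy]
      exact Set.mem_Iio.1 y.2
    · apply Subtype.ext
      exact Ordinal.add_sub_cancel_of_le hcy

theorem bridge : ∀ (α δ : Ordinal), RkGE α (Set.univ : Set ↥(Set.Iio δ)) ↔ P α δ := by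
  intro α
  induction α using Ordinal.induction with
  | _ α IH =>
    intro δ
    rw [RkGE_def, P_def]
    have hlt : ∀ (c : ↥(Set.Iio δ)) (β : Ordinal),
        RkGE β {y : ↥(Set.Iio δ) | y ∈ Set.univ ∧ y < c} ↔
          RkGE β (Set.univ : Set ↥(Set.Iio c.1)) := by
      intro c β
      rw [← RkGE_image (embIio c) (s := Set.univ), Set.image_univ, range_embIio]
    have hgt : ∀ (c : ↥(Set.Iio δ)) (β : Ordinal),
        RkGE β {y : ↥(Set.Iio δ) | y ∈ Set.univ ∧ c < y} ↔
          RkGE β (Set.univ : Set ↥(Set.Iio (δ - (c.1 + 1)))) := by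
      intro c β
      rw [← RkGE_image (embUpper c) (s := Set.univ), Set.image_univ, range_embUpper]
    constructor
    · intro h β hβ
      obtain ⟨c, -, h1, h2⟩ := h β hβ
      exact ⟨c.1, c.2, (IH β hβ c.1).mp ((hlt c β).mp h1),
        (IH β hβ _).mp ((hgt c β).mp h2)⟩
    · intro h β hβ
      obtain ⟨c', hc', h1, h2⟩ := h β hβ
      exact ⟨⟨c', hc'⟩, Set.mem_univ _, (hlt _ β).mpr ((IH β hβ _).mpr h1),
        (hgt _ β).mpr ((IH β hβ _).mpr h2)⟩

theorem bridge_toType (α δ : Ordinal) :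
    RkGE α (Set.univ : Set δ.ToType) ↔ P α δ :=
  (RkGE_congr (ToType.mk (o := δ)).symm).trans (bridge α δ)

noncomputable def finIso (k : ℕ) : Fin k ≃o ↥(Set.Iio ((k : ℕ) : Ordinal)) := by
  refine StrictMono.orderIsoOfSurjective
    (fun i => ⟨((i : ℕ) : Ordinal), Set.mem_Iio.2 (by exact_mod_cast i.2)⟩) ?_ ?_
  · intro a b h
    exact Subtype.mk_lt_mk.2 (by exact_mod_cast h)
  · intro x
    obtain ⟨m, hm⟩ := lt_omega0.1 ((Set.mem_Iio.1 x.2).trans (nat_lt_omega0 k))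
    have hmk : m < k := by
      have h2 := Set.mem_Iio.1 x.2
      rw [hm] at h2
      exact_mod_cast h2
    refine ⟨⟨m, hmk⟩, ?_⟩
    apply Subtype.ext
    exact hm.symm

theorem card_le_aleph0_iff (o : Ordinal.{0}) :
    o.card ≤ Cardinal.aleph0 ↔ (Set.Iio o).Countable := by
  rw [← Set.countable_coe_iff, ← Cardinal.mk_le_aleph0_iff, Ordinal.mk_Iio_ordinal,
    ← Cardinal.lift_aleph0.{1, 0}, Cardinal.lift_le]

theorem card_opow_le : ∀ β : Ordinal.{0}, β.card ≤ Cardinal.aleph0 →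
    ((ω : Ordinal) ^ β).card ≤ Cardinal.aleph0 := by
  intro β
  induction β using Ordinal.induction with
  | _ β IHs =>
    intro hβ
    rcases Ordinal.zero_or_succ_or_isSuccLimit β with rfl | ⟨q, hq⟩ | hlim
    · simp
    · rw [← Ordinal.add_one_eq_succ] at hq
      subst hq
      rw [opow_add, opow_one, card_mul, card_omega0]
      have hq' : q.card ≤ Cardinal.aleph0 :=
        le_trans (card_le_card (le_of_lt (lt_add_one q))) hβ
      calc (ω ^ q).card * Cardinal.aleph0
          ≤ Cardinal.aleph0 * Cardinal.aleph0 :=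
            mul_le_mul' (IHs q (lt_add_one q) hq') le_rfl
        _ = Cardinal.aleph0 := Cardinal.aleph0_mul_aleph0
    · have hcnt : (Set.Iio ((ω : Ordinal) ^ β)).Countable := by
        have hU : Set.Iio ((ω : Ordinal) ^ β) = ⋃ q ∈ Set.Iio β, Set.Iio ((ω : Ordinal) ^ q) := by
          ext x
          simp only [Set.mem_Iio, Set.mem_iUnion, exists_prop]
          exact lt_opow_of_isSuccLimit omega0_ne_zero hlim
        rw [hU]
        refine Set.Countable.biUnion ?_ ?_
        · exact (card_le_aleph0_iff β).1 hβ
        · intro q hq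
          exact (card_le_aleph0_iff _).1
            (IHs q hq (le_trans (card_le_card (le_of_lt hq)) hβ))
      exact (card_le_aleph0_iff _).2 hcnt

theorem countable_toType {δ : Ordinal} (h : δ.card ≤ Cardinal.aleph0) :
    Countable δ.ToType := by
  rw [← Cardinal.mk_le_aleph0_iff, Cardinal.mk_toType]
  exact h

theorem omega_le_opow {β : Ordinal} (hβ : 1 ≤ β) : ω ≤ ω ^ β := by
  calc ω = ω ^ (1 : Ordinal) := (opow_one ω).symm
    _ ≤ ω ^ β := opow_le_opow_right omega0_pos hβ

theorem omega_le_opow_mul {β : Ordinal} (hβ : 1 ≤ β) (n : ℕ) :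
    ω ≤ ω ^ β * ((2 ^ n : ℕ) : Ordinal) := by
  refine (omega_le_opow hβ).trans ?_
  calc ω ^ β = ω ^ β * 1 := (mul_one _).symm
    _ ≤ ω ^ β * ((2 ^ n : ℕ) : Ordinal) := by
        refine mul_le_mul_right ?_ _
        exact_mod_cast Nat.one_le_cast.2 Nat.one_le_two_pow

theorem two_pow_add (a : Ordinal) (n : ℕ) :
    a * ((2 ^ n : ℕ) : Ordinal) + a * ((2 ^ n : ℕ) : Ordinal)
      = a * ((2 ^ (n + 1) : ℕ) : Ordinal) := by
  rw [← mul_add]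
  congr 1
  norm_cast
  ring

theorem P_main : ∀ β : Ordinal, 1 ≤ β → ∀ n : ℕ,
    P (ω * β + n) (ω ^ β * ((2 ^ n : ℕ) : Ordinal)) := by
  intro β
  induction β using Ordinal.induction with
  | _ β IH =>
    intro hβ n
    induction n with
    | zero =>
      simp only [pow_zero, Nat.cast_one, mul_one, Nat.cast_zero, add_zero]
      have key : ∀ γ < ω * β, P (γ + 1) (ω ^ β) := by
        intro γ hγ
        have hq : γ / ω < β := (Ordinal.div_lt omega0_ne_zero).2 hγ
        obtain ⟨m, hm⟩ := lt_omega0.1 (mod_lt γ omega0_ne_zero)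
        rcases eq_or_ne (γ / ω) 0 with h0 | h0
        · have hγm : γ = (m : Ordinal) := by
            conv_lhs => rw [← Ordinal.div_add_mod γ ω]
            rw [h0, mul_zero, zero_add, hm]
          refine P_mono (δ := ((2 ^ (m + 1) - 1 : ℕ) : Ordinal))
            (le_of_lt ((nat_lt_omega0 _).trans_le (omega_le_opow hβ))) ?_
          rw [hγm]
          have h1 : (m : Ordinal) + 1 = ((m + 1 : ℕ) : Ordinal) := by norm_cast
          rw [h1]
          exact P_nat (m + 1)
        · have h1q : 1 ≤ γ / ω := Ordinal.one_le_iff_ne_zero.2 h0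
          have hIH := IH (γ / ω) hq h1q (m + 1)
          have hle : ω ^ (γ / ω) * ((2 ^ (m + 1) : ℕ) : Ordinal) ≤ ω ^ β := by
            have h1 : ω ^ (γ / ω) * ((2 ^ (m + 1) : ℕ) : Ordinal) < ω ^ (γ / ω) * ω :=
              mul_lt_mul_of_pos_left (nat_lt_omega0 _) (opow_pos _ omega0_pos)
            have h2 : ω ^ (γ / ω) * ω = ω ^ (γ / ω + 1) := by rw [opow_add, opow_one]
            have h3 : ω ^ (γ / ω + 1) ≤ ω ^ β := by
              refine opow_le_opow_right omega0_pos ?_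
              rw [Ordinal.add_one_eq_succ]
              exact Order.succ_le_of_lt hq
            exact le_of_lt (h1.trans_le (h2 ▸ h3))
          have hγ1 : γ + 1 = ω * (γ / ω) + ((m + 1 : ℕ) : Ordinal) := by
            conv_lhs => rw [← Ordinal.div_add_mod γ ω]
            rw [hm, add_assoc]
            norm_cast
          rw [hγ1]
          exact P_mono hle hIH
      rw [P_def]
      intro γ hγ
      have h := key γ hγ
      rw [P_def] at h
      exact h γ (lt_add_one γ)
    | succ n ihn =>
      have h := P_succ ihn ihn
      have e1 : ω ^ β * ((2 ^ n : ℕ) : Ordinal) + 1 + ω ^ β * ((2 ^ n : ℕ) : Ordinal)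
          = ω ^ β * ((2 ^ (n + 1) : ℕ) : Ordinal) := by
        rw [add_assoc, one_add_of_omega0_le (omega_le_opow_mul hβ n), two_pow_add]
      have e2 : ω * β + (n : Ordinal) + 1 = ω * β + ((n + 1 : ℕ) : Ordinal) := by
        rw [add_assoc]
        norm_cast
      rwa [e1, e2] at h

theorem U1 : ∀ n : ℕ, ∀ δ : Ordinal, P n δ → ((2 ^ n - 1 : ℕ) : Ordinal) ≤ δ := by
  intro n
  induction n with
  | zero => intro δ _; simp
  | succ n ih =>
    intro δ h
    rw [P_def] at h
    obtain ⟨c, hc, h1, h2⟩ := h n (by exact_mod_cast Nat.lt_succ_self n)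
    have i1 := ih c h1
    have i2 := ih _ h2
    have hδ : δ = (c + 1) + (δ - (c + 1)) := by
      rw [Ordinal.add_sub_cancel_of_le]
      rw [Ordinal.add_one_eq_succ]
      exact Order.succ_le_of_lt hc
    have : ((2 ^ n - 1 : ℕ) : Ordinal) + 1 + ((2 ^ n - 1 : ℕ) : Ordinal) ≤ δ := by
      rw [hδ]
      exact add_le_add (add_le_add_left i1 1) i2
    refine le_trans (le_of_eq ?_) this
    have h2n : 1 ≤ 2 ^ n := Nat.one_le_two_pow
    norm_cast
    omega

theorem U2 : ∀ β : Ordinal, 1 ≤ β → ∀ n : ℕ, ∀ δ : Ordinal,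
    P (ω * β + n) δ → ω ^ β * ((2 ^ n : ℕ) : Ordinal) ≤ δ := by
  intro β
  induction β using Ordinal.induction with
  | _ β IH =>
    intro hβ n
    induction n with
    | zero =>
      intro δ h
      simp only [Nat.cast_zero, add_zero] at h
      simp only [pow_zero, Nat.cast_one, mul_one]
      rcases Ordinal.zero_or_succ_or_isSuccLimit β with h0 | ⟨q, hq⟩ | hlim
      · exact absurd (h0 ▸ hβ) (by simp)
      · rw [← Ordinal.add_one_eq_succ] at hq
        subst hq
        rcases eq_or_ne q 0 with rfl | hq0
        · -- β = 1 : show ω ≤ δ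
          simp only [zero_add, opow_one]
          rw [Ordinal.omega0_le]
          intro m
          have hm : P ((m + 1 : ℕ) : Ordinal) δ := by
            refine P_down ?_ h
            rw [zero_add, mul_one]
            exact le_of_lt (nat_lt_omega0 _)
          have := U1 (m + 1) δ hm
          refine le_trans ?_ this
          have : m ≤ 2 ^ (m + 1) - 1 := by
            have := (Nat.lt_two_pow_self (n := m))
            have h2 : 2 ^ m ≤ 2 ^ (m + 1) := Nat.pow_le_pow_right (by norm_num) (Nat.le_succ m)
            omega
          exact_mod_cast Nat.cast_le.2 this
        · have hq1 : 1 ≤ q := Ordinal.one_le_iff_ne_zero.2 hq0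
          rw [opow_add, opow_one]
          rw [mul_le_iff_of_isSuccLimit isSuccLimit_omega0]
          intro r hr
          obtain ⟨m, rfl⟩ := lt_omega0.1 hr
          have hP : P (ω * q + m) δ := by
            refine P_down (le_of_lt ?_) h
            calc ω * q + (m : Ordinal) < ω * q + ω := by
                  exact add_lt_add_right (nat_lt_omega0 m) _
              _ = ω * (q + 1) := by rw [mul_add, mul_one]
          have := IH q (lt_add_one q) hq1 m δ hP
          refine le_trans ?_ this
          refine mul_le_mul_right ?_ _
          exact_mod_cast Nat.cast_le.2 (le_of_lt ((Nat.lt_two_pow_self (n := m))))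
      · rw [opow_le_of_isSuccLimit omega0_ne_zero hlim]
        intro q hq
        rcases eq_or_ne q 0 with rfl | hq0
        · rw [opow_zero]
          rw [Order.one_le_iff_pos]
          have h1 : P 1 δ := by
            refine P_down ?_ h
            calc (1 : Ordinal) ≤ ω := le_of_lt one_lt_omega0
              _ = ω * 1 := (mul_one ω).symm
              _ ≤ ω * β := mul_le_mul_right hβ ω
          rw [P_def] at h1
          obtain ⟨c, hc, -, -⟩ := h1 0 one_pos
          exact lt_of_le_of_lt (zero_le (a := c)) hc
        · have hq1 : 1 ≤ q := Ordinal.one_le_iff_ne_zero.2 hq0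
          have hP : P (ω * q) δ := by
            refine P_down (mul_le_mul_right (le_of_lt hq) ω) h
          have := IH q hq hq1 0 δ (by simpa using hP)
          simpa using this
    | succ n ihn =>
      intro δ h
      rw [P_def] at h
      obtain ⟨c, hc, h1, h2⟩ := h (ω * β + n) (by
        refine add_lt_add_right ?_ _
        exact_mod_cast Nat.lt_succ_self n)
      have i1 := ihn c h1
      have i2 := ihn _ h2
      have hδ : δ = (c + 1) + (δ - (c + 1)) := by
        rw [Ordinal.add_sub_cancel_of_le]
        rw [Ordinal.add_one_eq_succ]
        exact Order.succ_le_of_lt hc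
      have key : ω ^ β * ((2 ^ n : ℕ) : Ordinal) + 1 + ω ^ β * ((2 ^ n : ℕ) : Ordinal) ≤ δ := by
        rw [hδ]
        exact add_le_add (add_le_add_left i1 1) i2
      rw [add_assoc, one_add_of_omega0_le (omega_le_opow_mul hβ n), two_pow_add] at key
      exact key



theorem key_finite (γ : Ordinal) (n : ℕ) (Y : Type) [LinearOrder Y] [Finite Y]
    (h : Nat.card Y = 2 ^ n - 1) :
    RkGE γ (Set.univ : Set Y) ↔ P γ ((2 ^ n - 1 : ℕ) : Ordinal) := by
  have : Fintype Y := Fintype.ofFinite Y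
  have hc : Fintype.card Y = 2 ^ n - 1 := by rw [← Nat.card_eq_fintype_card, h]
  exact (RkGE_congr ((monoEquivOfFin Y hc).symm.trans (finIso (2 ^ n - 1)))).trans (bridge γ _)

theorem finite_case (n : ℕ) (Y : Type) [LinearOrder Y] [Finite Y]
    (h : Nat.card Y = 2 ^ n - 1) :
    RkGE (n : Ordinal) (Set.univ : Set Y) ∧
      ¬ RkGE ((n : Ordinal) + 1) (Set.univ : Set Y) := by
  constructor
  · exact (key_finite _ n Y h).mpr (P_nat n)
  · intro hRk
    have hP := (key_finite _ n Y h).mp hRk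
    have hcast : ((n : ℕ) : Ordinal) + 1 = ((n + 1 : ℕ) : Ordinal) := by norm_cast
    rw [hcast] at hP
    have hle := U1 (n + 1) _ hP
    have hle' : (2 ^ (n + 1) - 1 : ℕ) ≤ 2 ^ n - 1 := by exact_mod_cast hle
    have h1 : 1 ≤ 2 ^ n := Nat.one_le_two_pow
    have h2 : 2 ^ (n + 1) = 2 * 2 ^ n := by ring
    omega

theorem infinite_case (α β : Ordinal.{0}) (n : ℕ) (hβ : 1 ≤ β) (hα : α = ω * β + n) :
    RkGE α (Set.univ : Set (ω ^ β * (2 ^ n : ℕ) : Ordinal).ToType) ∧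
      ¬ RkGE (α + 1) (Set.univ : Set (ω ^ β * (2 ^ n : ℕ) : Ordinal).ToType) := by
  constructor
  · rw [bridge_toType, hα]
    exact P_main β hβ n
  · rw [bridge_toType]
    intro hP
    have hcast : α + 1 = ω * β + ((n + 1 : ℕ) : Ordinal) := by
      rw [hα, add_assoc]
      norm_cast
    rw [hcast] at hP
    have hle := U2 β hβ (n + 1) _ hP
    have hlt : ω ^ β * ((2 ^ n : ℕ) : Ordinal) < ω ^ β * ((2 ^ (n + 1) : ℕ) : Ordinal) := by
      refine mul_lt_mul_of_pos_left ?_ (opow_pos _ omega0_pos)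
      have : (2 : ℕ) ^ n < 2 ^ (n + 1) := by
        have h1 : 1 ≤ 2 ^ n := Nat.one_le_two_pow
        have h2 : 2 ^ (n + 1) = 2 * 2 ^ n := by ring
        omega
      exact_mod_cast this
    exact absurd hle (not_le.2 hlt)

end RankProof

/-- **Rank Property for linear orders** (Corollary 5.17): every countable ordinal `α` is
the rank of some countable linear order.  Explicitly: any finite linear order of size
`2 ^ n - 1` has rank `n`, and for `α = ω·β + n ≥ ω` (with `β ≥ 1`, `n < ω`) the ordinal
`ω^β · 2^n` has rank exactly `α`. -/
theorem rank_property_for_linear_orders :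
    (∀ α : Ordinal.{0}, α.card ≤ Cardinal.aleph0 →
      ∃ (Y : Type) (inst : LinearOrder Y), Countable Y ∧
        @RkGE Y inst α Set.univ ∧ ¬ @RkGE Y inst (α + 1) Set.univ) ∧
    (∀ (n : ℕ) (Y : Type) [LinearOrder Y] [Finite Y], Nat.card Y = 2 ^ n - 1 →
      RkGE (n : Ordinal) (Set.univ : Set Y) ∧
        ¬ RkGE ((n : Ordinal) + 1) (Set.univ : Set Y)) ∧
    (∀ (α β : Ordinal.{0}) (n : ℕ), ω ≤ α → α.card ≤ Cardinal.aleph0 → 1 ≤ β →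
      α = ω * β + n →
      RkGE α (Set.univ : Set (ω ^ β * (2 ^ n : ℕ) : Ordinal).ToType) ∧
        ¬ RkGE (α + 1) (Set.univ : Set (ω ^ β * (2 ^ n : ℕ) : Ordinal).ToType)) := by
  refine ⟨?_, fun n Y _ _ h => RankProof.finite_case n Y h,
    fun α β n _ _ hβ hα => RankProof.infinite_case α β n hβ hα⟩
  intro α hα
  rcases lt_or_ge α ω with hfin | hinf
  · obtain ⟨k, rfl⟩ := lt_omega0.1 hfin
    exact ⟨Fin (2 ^ k - 1), inferInstance, inferInstance,
      RankProof.finite_case k (Fin (2 ^ k - 1)) (by simp)⟩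
  · obtain ⟨k, hk⟩ := lt_omega0.1 (mod_lt α omega0_ne_zero)
    have hαeq : α = ω * (α / ω) + (k : Ordinal) := by
      conv_lhs => rw [← Ordinal.div_add_mod α ω]
      rw [hk]
    have hβ1 : 1 ≤ α / ω := (Ordinal.le_div omega0_ne_zero).2 (by rwa [mul_one])
    have hβcard : (α / ω).card ≤ Cardinal.aleph0 :=
      le_trans (card_le_card (le_trans (Ordinal.le_mul_right _ omega0_pos)
        (mul_div_le α ω))) hα
    have hδcard : ((ω ^ (α / ω) * ((2 ^ k : ℕ) : Ordinal)) : Ordinal).card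
        ≤ Cardinal.aleph0 := by
      rw [card_mul]
      refine le_trans (mul_le_mul' (RankProof.card_opow_le _ hβcard) ?_)
        (le_of_eq Cardinal.aleph0_mul_aleph0)
      rw [card_nat]
      exact (Cardinal.nat_lt_aleph0 _).le
    exact ⟨_, inferInstance, RankProof.countable_toType hδcard,
      RankProof.infinite_case α (α / ω) k hβ1 hαeq⟩
end

section
/- Let α be a countable ordinal with α ≥ ω, and let ω^{β_1}·c_1 be the leading term of its Cantor normal form (so β_1 ≥ 1 and 1 ≤ c_1 < ω). Then rk(ℤ · α) = ω·(1 + β_1) + ⌊log₂ c_1⌋, where ℤ · α denotes the linear order consisting of α consecutive copies of the integers. In particular, for α ≥ ω the rank of ℤ · α depends only on the leading term of the Cantor normal form of α. -/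
open Ordinal

namespace ZRank

variable {Y : Type*} [LinearOrder Y]

theorem rkGE_iff (γ : Ordinal) (s : Set Y) :
    RkGE γ s ↔ ∀ β < γ, ∃ c ∈ s, RkGE β {y ∈ s | y < c} ∧ RkGE β {y ∈ s | c < y} := by
  unfold RkGE
  rw [WellFounded.fix_eq]

theorem rkGE_anti {γ μ : Ordinal} (h : μ ≤ γ) {s : Set Y} (hs : RkGE γ s) : RkGE μ s := by
  rw [rkGE_iff] at *
  exact fun β hβ => hs β (hβ.trans_le h)

theorem rkGE_mono : ∀ γ : Ordinal, ∀ {s t : Set Y}, s ⊆ t → RkGE γ s → RkGE γ t := by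
  intro γ
  induction γ using Ordinal.induction with
  | h γ ihγ =>
    intro s t hst h
    rw [rkGE_iff] at h ⊢
    intro β hβ
    obtain ⟨c, hc, h1, h2⟩ := h β hβ
    exact ⟨c, hst hc,
      ihγ β hβ (fun y hy => ⟨hst hy.1, hy.2⟩) h1,
      ihγ β hβ (fun y hy => ⟨hst hy.1, hy.2⟩) h2⟩

theorem rkGE_nat : ∀ n : ℕ, ∀ s : Set Y, ∀ f : Fin (2 ^ n - 1) → Y,
    StrictMono f → (∀ i, f i ∈ s) → RkGE (n : Ordinal) s := by
  intro n
  induction n with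
  | zero => intro s f _ _; rw [rkGE_iff]; intro β hβ; rw [Nat.cast_zero] at hβ; exact absurd hβ (not_lt_zero (a := β))
  | succ n ih =>
    intro s f hf hfs
    have hlt : 2 ^ n - 1 < 2 ^ (n + 1) - 1 := by
      have : 0 < 2 ^ n := Nat.pow_pos (by norm_num)
      have : 2 ^ (n+1) = 2 * 2 ^ n := by ring
      omega
    set c := f ⟨2 ^ n - 1, hlt⟩ with hc
    rw [rkGE_iff]
    intro β hβ
    obtain ⟨m, rfl⟩ := Ordinal.lt_omega0.mp (hβ.trans (Ordinal.nat_lt_omega0 _))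
    have hmn : m ≤ n := by
      have := Nat.cast_lt.mp hβ; omega
    refine ⟨c, hfs _, ?_, ?_⟩
    · refine rkGE_anti (by exact_mod_cast Nat.cast_le.mpr (by omega : m ≤ n)) ?_
      refine ih _ (fun i => f ⟨i.1, by have := i.2; omega⟩) ?_ ?_
      · intro a b hab
        exact hf (by simpa using hab)
      · intro i
        exact ⟨hfs _, hf (Fin.mk_lt_mk.mpr (by have := i.2; omega))⟩
    · refine rkGE_anti (by exact_mod_cast Nat.cast_le.mpr (by omega : m ≤ n)) ?_
      refine ih _ (fun i => f ⟨2 ^ n + i.1, by have := i.2; omega⟩) ?_ ?_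
      · intro a b hab
        exact hf (by simpa using hab)
      · intro i
        exact ⟨hfs _, hf (Fin.mk_lt_mk.mpr (by have := i.2; omega))⟩

theorem rkGE_omega0 {s : Set Y} (hs : s.Infinite) : RkGE ω s := by
  rw [rkGE_iff]
  intro β hβ
  obtain ⟨m, rfl⟩ := Ordinal.lt_omega0.mp hβ
  obtain ⟨t, hts, htc⟩ := hs.exists_subset_card_eq (2 ^ (m + 1) - 1)
  have hmono : StrictMono (fun i => ((t.orderIsoOfFin htc) i : Y)) := by
    intro a b hab
    exact Subtype.coe_lt_coe.mpr ((t.orderIsoOfFin htc).strictMono hab)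
  have hmem : ∀ i, ((t.orderIsoOfFin htc) i : Y) ∈ s := fun i => hts (t.orderIsoOfFin htc i).2
  have := rkGE_nat (m + 1) s _ hmono hmem
  rw [rkGE_iff] at this
  exact this m (by exact_mod_cast Nat.lt_succ_self m)

end ZRank

namespace ZRank

section Ambient

variable {A : Ordinal}

noncomputable def cp {A : Ordinal} (x : A.ToType) : Ordinal := ((ToType.mk (o := A)).symm x).1

theorem cp_lt (x : A.ToType) : cp x < A := ((ToType.mk (o := A)).symm x).2

theorem cp_lt_cp {x y : A.ToType} : cp x < cp y ↔ x < y := by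
  rw [cp, cp, Subtype.coe_lt_coe]
  exact (ToType.mk (o := A)).symm.lt_iff_lt

noncomputable def pt (o : Ordinal) (h : o < A) (m : ℤ) : Lex (A.ToType × ℤ) :=
  toLex (ToType.mk ⟨o, h⟩, m)

theorem cp_pt (o : Ordinal) (h : o < A) (m : ℤ) : cp (ofLex (pt o h m)).1 = o := by
  simp [cp, pt]

def Full (A : Ordinal) (i j : Ordinal) : Set (Lex (A.ToType × ℤ)) :=
  {y | i ≤ cp (ofLex y).1 ∧ cp (ofLex y).1 < j}

theorem lex_lt_iff {y z : Lex (A.ToType × ℤ)} :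
    y < z ↔ (ofLex y).1 < (ofLex z).1 ∨ ((ofLex y).1 = (ofLex z).1 ∧ (ofLex y).2 < (ofLex z).2) :=
  Prod.Lex.lt_iff

theorem mem_full_pt {i j o : Ordinal} (h : o < A) (m : ℤ) (h1 : i ≤ o) (h2 : o < j) :
    pt o h m ∈ Full A i j := by
  constructor <;> rw [cp_pt]
  · exact h1
  · exact h2

theorem full_subset_full {i i' j j' : Ordinal} (h1 : i' ≤ i) (h2 : j ≤ j') :
    Full A i j ⊆ Full A i' j' :=
  fun _ hy => ⟨h1.trans hy.1, lt_of_lt_of_le hy.2 h2⟩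

theorem full_lt_pt {i j o : Ordinal} {h : o < A} {m : ℤ} (hj : j ≤ o) :
    ∀ y ∈ Full A i j, y < pt o h m := by
  intro y hy
  rw [lex_lt_iff]
  left
  apply cp_lt_cp.mp
  rw [cp_pt]
  exact lt_of_lt_of_le hy.2 hj

theorem pt_lt_full {o j k : Ordinal} {h : o < A} {m : ℤ} (ho : o < j) :
    ∀ y ∈ Full A j k, pt o h m < y := by
  intro y hy
  rw [lex_lt_iff]
  left
  apply cp_lt_cp.mp
  rw [cp_pt]
  exact lt_of_lt_of_le ho hy.1

theorem pt_injective (o : Ordinal) (h : o < A) : Function.Injective (pt o h) := by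
  intro m m' hmm
  have := congrArg (fun y => (ofLex y).2) hmm
  simpa [pt] using this

theorem full_infinite {i j : Ordinal} (hij : i < j) (hj : j ≤ A) : (Full A i j).Infinite :=
  Set.infinite_of_injective_forall_mem (f := fun m : ℤ => pt i (lt_of_lt_of_le hij hj) m)
    (pt_injective _ _) (fun m => mem_full_pt _ m le_rfl hij)

theorem subset_left_cut {i j j' p : Ordinal} (hp : p < A) {s : Set (Lex (A.ToType × ℤ))}
    (hs : Full A i j' ⊆ s) (h1 : j ≤ p) (h2 : j ≤ j') (m : ℤ) :
    Full A i j ⊆ {y ∈ s | y < pt p hp m} :=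
  fun y hy => ⟨hs ⟨hy.1, lt_of_lt_of_le hy.2 h2⟩, full_lt_pt h1 _ hy⟩

theorem subset_right_cut {i' j' p i j : Ordinal} (hp : p < A) {s : Set (Lex (A.ToType × ℤ))}
    (hs : Full A i j ⊆ s) (h1 : p < i') (h2 : i ≤ i') (h3 : j' ≤ j) (m : ℤ) :
    Full A i' j' ⊆ {y ∈ s | pt p hp m < y} :=
  fun y hy => ⟨hs ⟨h2.trans hy.1, lt_of_lt_of_le hy.2 h3⟩, pt_lt_full h1 _ hy⟩

theorem half_lower_infinite {p : Ordinal} (hp : p < A) {s : Set (Lex (A.ToType × ℤ))}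
    (hs : ∀ m : ℤ, pt p hp m ∈ s) : {y ∈ s | y < pt p hp 0}.Infinite := by
  apply Set.infinite_of_injective_forall_mem
    (f := fun k : ℕ => pt p hp (-(k : ℤ) - 1))
  · intro a b hab
    have := pt_injective p hp hab
    omega
  · intro k
    refine ⟨hs _, ?_⟩
    rw [lex_lt_iff]
    right
    refine ⟨rfl, ?_⟩
    simp only [pt, ofLex_toLex]
    omega

theorem half_upper_infinite {p : Ordinal} (hp : p < A) {s : Set (Lex (A.ToType × ℤ))}
    (hs : ∀ m : ℤ, pt p hp m ∈ s) : {y ∈ s | pt p hp 0 < y}.Infinite := by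
  apply Set.infinite_of_injective_forall_mem
    (f := fun k : ℕ => pt p hp ((k : ℤ) + 1))
  · intro a b hab
    have := pt_injective p hp hab
    omega
  · intro k
    refine ⟨hs _, ?_⟩
    rw [lex_lt_iff]
    right
    refine ⟨rfl, ?_⟩
    simp only [pt, ofLex_toLex]
    omega

theorem dlem : ∀ n : ℕ, 1 ≤ n → ∀ i : Ordinal, i + n ≤ A →
    ∀ s : Set (Lex (A.ToType × ℤ)), Full A i (i + n) ⊆ s →
    RkGE (ω + (Nat.log 2 (n + 1) : Ordinal)) s := by
  intro n
  induction n using Nat.strong_induction_on with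
  | _ n ih =>
  intro hn i hiA s hs
  have hin : i < i + (n : Ordinal) := by
    have : (0 : Ordinal) < n := by exact_mod_cast hn
    simpa using (add_lt_add_iff_left i).mpr this
  have hsInf : s.Infinite := (full_infinite hin hiA).mono hs
  rw [rkGE_iff]
  intro γ hγ
  rcases lt_or_ge γ ω with hγω | hγω
  · have h0 := rkGE_omega0 hsInf
    rw [rkGE_iff] at h0
    exact h0 γ hγω
  · have hγe : γ = ω + (γ - ω) := (Ordinal.add_sub_cancel_of_le hγω).symm
    have he'lt : γ - ω < (Nat.log 2 (n + 1) : Ordinal) := by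
      rw [hγe] at hγ
      exact (add_lt_add_iff_left ω).mp hγ
    obtain ⟨e, he⟩ := Ordinal.lt_omega0.mp (he'lt.trans (nat_lt_omega0 _))
    rw [he] at hγe he'lt
    have helog : e < Nat.log 2 (n + 1) := by exact_mod_cast he'lt
    have hpow : 2 ^ (e + 1) ≤ n + 1 :=
      (Nat.le_log_iff_pow_le (by norm_num) (by omega)).mp helog
    have h2epos : 0 < 2 ^ e := Nat.pow_pos (by norm_num)
    have h2e2 : 2 ^ (e + 1) = 2 * 2 ^ e := by ring
    have h2e1 : 2 ^ e - 1 < n := by omega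
    have hpA : i + ((2 ^ e - 1 : ℕ) : Ordinal) < A :=
      lt_of_lt_of_le ((add_lt_add_iff_left i).mpr (by exact_mod_cast h2e1)) hiA
    have hmemc : pt (i + ((2 ^ e - 1 : ℕ) : Ordinal)) hpA 0 ∈ s := by
      apply hs
      exact mem_full_pt _ _ (le_self_add)
        ((add_lt_add_iff_left i).mpr (by exact_mod_cast h2e1))
    have hallm : ∀ m : ℤ, pt (i + ((2 ^ e - 1 : ℕ) : Ordinal)) hpA m ∈ s := by
      intro m
      apply hs
      exact mem_full_pt _ _ (le_self_add)
        ((add_lt_add_iff_left i).mpr (by exact_mod_cast h2e1))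
    rw [hγe]
    refine ⟨pt (i + ((2 ^ e - 1 : ℕ) : Ordinal)) hpA 0, hmemc, ?_, ?_⟩
    · -- left side
      rcases Nat.eq_zero_or_pos e with rfl | hepos
      · rw [Nat.cast_zero, add_zero]
        exact rkGE_omega0 (half_lower_infinite hpA hallm)
      · have h2ee : 2 ≤ 2 ^ e := by
          calc 2 = 2 ^ 1 := by norm_num
          _ ≤ 2 ^ e := Nat.pow_le_pow_right (by norm_num) hepos
        have h1le : 1 ≤ 2 ^ e - 1 := by omega
        have hend : i + ((2 ^ e - 1 : ℕ) : Ordinal) ≤ A := hpA.le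
        have hsub : Full A i (i + ((2 ^ e - 1 : ℕ) : Ordinal)) ⊆
            {y ∈ s | y < pt (i + ((2 ^ e - 1 : ℕ) : Ordinal)) hpA 0} :=
          subset_left_cut hpA hs le_rfl
            ((add_le_add_iff_left i).mpr (by exact_mod_cast h2e1.le)) 0
        have := ih (2 ^ e - 1) h2e1 h1le i hend _ hsub
        have hlogeq : Nat.log 2 (2 ^ e - 1 + 1) = e := by
          rw [Nat.sub_add_cancel (by omega)]
          exact Nat.log_pow (by norm_num) e
        rwa [hlogeq] at this
    · -- right side
      rcases Nat.eq_zero_or_pos e with rfl | hepos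
      · rw [Nat.cast_zero, add_zero]
        exact rkGE_omega0 (half_upper_infinite hpA hallm)
      · have h2ee : 2 ≤ 2 ^ e := by
          calc 2 = 2 ^ 1 := by norm_num
          _ ≤ 2 ^ e := Nat.pow_le_pow_right (by norm_num) hepos
        set n' := n - 2 ^ e with hn'
        have hn'1 : 1 ≤ n' := by omega
        have h2en : (2 ^ e : ℕ) ≤ n := by omega
        have hend : (i + ((2 ^ e : ℕ) : Ordinal)) + ((n' : ℕ) : Ordinal) ≤ A := by
          rw [add_assoc, ← Nat.cast_add]
          have : 2 ^ e + n' = n := by omega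
          rw [this]
          exact hiA
        have hsub : Full A (i + ((2 ^ e : ℕ) : Ordinal)) ((i + ((2 ^ e : ℕ) : Ordinal)) + (n' : Ordinal)) ⊆
            {y ∈ s | pt (i + ((2 ^ e - 1 : ℕ) : Ordinal)) hpA 0 < y} := by
          apply subset_right_cut hpA hs
          · exact (add_lt_add_iff_left i).mpr (by exact_mod_cast (by omega : 2 ^ e - 1 < 2 ^ e))
          · exact le_self_add
          · rw [add_assoc, ← Nat.cast_add]
            apply (add_le_add_iff_left i).mpr
            exact_mod_cast (by omega : 2 ^ e + n' ≤ n)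
        have := ih n' (by omega) hn'1 _ hend _ hsub
        refine rkGE_anti ?_ this
        apply add_le_add_right
        have : 2 ^ e ≤ n' + 1 := by omega
        have := (Nat.le_log_iff_pow_le (by norm_num) (by omega : n' + 1 ≠ 0)).mpr this
        exact_mod_cast this

end Ambient

end ZRank

namespace ZRank

section Core

variable {A : Ordinal}

theorem core : ∀ β : Ordinal, 1 ≤ β → ∀ c : ℕ, 1 ≤ c → ∀ i : Ordinal,
    i + ω ^ β * c ≤ A → ∀ s : Set (Lex (A.ToType × ℤ)), Full A i (i + ω ^ β * c) ⊆ s →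
    RkGE (ω * (1 + β) + (Nat.log 2 c : Ordinal)) s := by
  intro β
  induction β using Ordinal.induction with
  | h β ihβ =>
  intro hβ1 c
  induction c using Nat.strong_induction_on with
  | _ c ihc =>
  intro hc i hiA s hs
  have hωβ : ω ≤ ω ^ β := by
    calc ω = ω ^ (1 : Ordinal) := (opow_one ω).symm
    _ ≤ ω ^ β := opow_le_opow_right omega0_pos hβ1
  have hωβc : ω ^ β ≤ ω ^ β * c := by
    conv_lhs => rw [← mul_one (ω ^ β)]
    exact mul_le_mul_right (by exact_mod_cast hc) _
  have hgap : (0 : Ordinal) < ω ^ β * c :=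
    lt_of_lt_of_le omega0_pos (hωβ.trans hωβc)
  have hin : i < i + ω ^ β * c := by simpa using (add_lt_add_iff_left i).mpr hgap
  rw [rkGE_iff]
  intro γ hγ
  rcases lt_or_ge γ ω with hγω | hγω
  · have h0 := rkGE_omega0 ((full_infinite hin hiA).mono hs)
    rw [rkGE_iff] at h0
    exact h0 γ hγω
  rcases lt_or_ge γ (ω * (1 + β)) with hγβ | hγβ
  · -- ω ≤ γ < ω·(1+β)
    have hγqr : ω * (γ / ω) + γ % ω = γ := Ordinal.div_add_mod γ ω
    obtain ⟨m, hm⟩ := Ordinal.lt_omega0.mp (Ordinal.mod_lt γ Ordinal.omega0_ne_zero)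
    have hq1 : 1 ≤ γ / ω := by
      by_contra h
      push_neg at h
      rw [Ordinal.lt_one_iff_zero] at h
      rw [h, mul_zero, zero_add] at hγqr
      rw [← hγqr, hm] at hγω
      exact absurd hγω (nat_lt_omega0 m).not_ge
    have hqβ : γ / ω < 1 + β := by
      apply (mul_lt_mul_iff_right₀ omega0_pos).mp
      exact lt_of_le_of_lt (Ordinal.mul_div_le γ ω) hγβ
    have hq : 1 + (γ / ω - 1) = γ / ω := Ordinal.add_sub_cancel_of_le hq1
    set β'' := γ / ω - 1 with hβ''def
    have hβ''β : β'' < β := by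
      apply (add_lt_add_iff_left (1 : Ordinal)).mp
      rw [hq]
      exact hqβ
    have hγeq : γ = ω * (1 + β'') + m := by
      rw [hq, ← hm, hγqr]
    rcases eq_zero_or_pos β'' with hβ''0 | hβ''pos
    · -- β'' = 0 : γ = ω + m, use dlem on both sides
      have hγeq' : γ = ω + (m : Ordinal) := by
        rw [hγeq, hβ''0, add_zero, mul_one]
      have hfit : ((2 ^ m + 1 + 2 ^ m : ℕ) : Ordinal) ≤ ω ^ β * c :=
        le_trans (nat_lt_omega0 _).le (hωβ.trans hωβc)
      have h2m : ((2 ^ m : ℕ) : Ordinal) ≤ ω ^ β * c := le_trans (nat_lt_omega0 _).le (hωβ.trans hωβc)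
      have hpA : i + ((2 ^ m : ℕ) : Ordinal) < A := by
        apply lt_of_lt_of_le _ hiA
        apply (add_lt_add_iff_left i).mpr
        exact lt_of_lt_of_le (nat_lt_omega0 _) (hωβ.trans hωβc)
      refine ⟨pt (i + ((2 ^ m : ℕ) : Ordinal)) hpA 0, ?_, ?_, ?_⟩
      · apply hs
        exact mem_full_pt _ _ (le_self_add)
          ((add_lt_add_iff_left i).mpr (lt_of_lt_of_le (nat_lt_omega0 _) (hωβ.trans hωβc)))
      · -- left : dlem with n = 2^m
        have hsub : Full A i (i + ((2 ^ m : ℕ) : Ordinal)) ⊆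
            {y ∈ s | y < pt (i + ((2 ^ m : ℕ) : Ordinal)) hpA 0} :=
          subset_left_cut hpA hs le_rfl ((add_le_add_iff_left i).mpr h2m) 0
        have := dlem (2 ^ m) (Nat.one_le_two_pow) i hpA.le _ hsub
        refine rkGE_anti ?_ this
        rw [hγeq']
        apply add_le_add_right
        have : 2 ^ m ≤ 2 ^ m + 1 := by omega
        have := (Nat.le_log_iff_pow_le (by norm_num) (Nat.succ_ne_zero _)).mpr this
        exact_mod_cast this
      · -- right : dlem with n = 2^m starting at i + 2^m + 1
        have hend : (i + ((2 ^ m : ℕ) : Ordinal) + 1) + ((2 ^ m : ℕ) : Ordinal) ≤ A := by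
          apply le_trans _ hiA
          rw [add_assoc, add_assoc]
          apply add_le_add_right
          rw [← add_assoc]
          calc ((2 ^ m : ℕ) : Ordinal) + 1 + ((2 ^ m : ℕ) : Ordinal)
              = ((2 ^ m + 1 + 2 ^ m : ℕ) : Ordinal) := by push_cast; rfl
          _ ≤ ω ^ β * c := hfit
        have hsub : Full A (i + ((2 ^ m : ℕ) : Ordinal) + 1)
            ((i + ((2 ^ m : ℕ) : Ordinal) + 1) + ((2 ^ m : ℕ) : Ordinal)) ⊆
            {y ∈ s | pt (i + ((2 ^ m : ℕ) : Ordinal)) hpA 0 < y} := by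
          apply subset_right_cut hpA hs
          · exact lt_add_one _
          · calc i ≤ i + ((2 ^ m : ℕ) : Ordinal) := le_self_add
            _ ≤ _ := (lt_add_one _).le
          · rw [add_assoc, add_assoc]
            apply add_le_add_right
            rw [← add_assoc]
            calc ((2 ^ m : ℕ) : Ordinal) + 1 + ((2 ^ m : ℕ) : Ordinal)
                = ((2 ^ m + 1 + 2 ^ m : ℕ) : Ordinal) := by push_cast; rfl
            _ ≤ ω ^ β * c := hfit
        have := dlem (2 ^ m) (Nat.one_le_two_pow) _ hend _ hsub
        refine rkGE_anti ?_ this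
        rw [hγeq']
        apply add_le_add_right
        have : 2 ^ m ≤ 2 ^ m + 1 := by omega
        have := (Nat.le_log_iff_pow_le (by norm_num) (Nat.succ_ne_zero _)).mpr this
        exact_mod_cast this
    · -- β'' ≥ 1
      have hβ''1 : 1 ≤ β'' := Order.one_le_iff_pos.mpr hβ''pos
      set x := ω ^ β'' * ((2 ^ m : ℕ) : Ordinal) with hxdef
      have hωx : ω ≤ x := by
        calc ω = ω ^ (1:Ordinal) := (opow_one ω).symm
        _ ≤ ω ^ β'' := opow_le_opow_right omega0_pos hβ''1
        _ = ω ^ β'' * 1 := (mul_one _).symm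
        _ ≤ x := mul_le_mul_right (by exact_mod_cast Nat.one_le_two_pow) _
      have hx1x : x + 1 + x ≤ ω ^ β * c := by
        rw [add_assoc, Ordinal.one_add_of_omega0_le hωx, ← mul_add, ← Nat.cast_add]
        have h2m2 : ((2 ^ m + 2 ^ m : ℕ) : Ordinal) < ω := nat_lt_omega0 _
        have hstep : ω ^ β'' * ((2 ^ m + 2 ^ m : ℕ) : Ordinal) < ω ^ β * c := by
          calc ω ^ β'' * ((2 ^ m + 2 ^ m : ℕ) : Ordinal)
              < ω ^ β'' * ω := (mul_lt_mul_iff_right₀ (opow_pos _ omega0_pos)).mpr h2m2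
          _ = ω ^ (β'' + 1) := (opow_succ ω β'').symm
          _ ≤ ω ^ β := opow_le_opow_right omega0_pos (by
              rw [Ordinal.add_one_eq_succ, Order.succ_le_iff]; exact hβ''β)
          _ ≤ ω ^ β * c := hωβc
        exact hstep.le
      have hxc : x ≤ ω ^ β * c :=
        le_trans (le_trans ((le_self_add (a := x) (b := 1))) ((le_self_add (a := x + 1) (b := x)))) hx1x
      have hpA : i + x < A := by
        apply lt_of_lt_of_le _ hiA
        apply (add_lt_add_iff_left i).mpr
        apply lt_of_lt_of_le _ hx1x
        calc x < x + 1 := lt_add_one x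
        _ ≤ x + 1 + x := le_self_add
      refine ⟨pt (i + x) hpA 0, ?_, ?_, ?_⟩
      · apply hs
        refine mem_full_pt _ _ (le_self_add) ((add_lt_add_iff_left i).mpr ?_)
        apply lt_of_lt_of_le _ hx1x
        calc x < x + 1 := lt_add_one x
        _ ≤ x + 1 + x := le_self_add
      · -- left
        have hsub : Full A i (i + x) ⊆ {y ∈ s | y < pt (i + x) hpA 0} :=
          subset_left_cut hpA hs le_rfl ((add_le_add_iff_left i).mpr hxc) 0
        have := ihβ β'' hβ''β hβ''1 (2 ^ m) Nat.one_le_two_pow i hpA.le _ hsub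
        refine rkGE_anti ?_ this
        rw [hγeq, Nat.log_pow (by norm_num)]
      · -- right
        have hend : (i + x + 1) + x ≤ A := by
          apply le_trans _ hiA
          rw [add_assoc, add_assoc]
          apply add_le_add_right
          rw [← add_assoc]
          exact hx1x
        have hsub : Full A (i + x + 1) ((i + x + 1) + x) ⊆
            {y ∈ s | pt (i + x) hpA 0 < y} := by
          apply subset_right_cut hpA hs
          · exact lt_add_one _
          · calc i ≤ i + x := le_self_add
            _ ≤ _ := (lt_add_one _).le
          · rw [add_assoc, add_assoc]
            apply add_le_add_right
            rw [← add_assoc]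
            exact hx1x
        have := ihβ β'' hβ''β hβ''1 (2 ^ m) Nat.one_le_two_pow _ hend _ hsub
        refine rkGE_anti ?_ this
        rw [hγeq, Nat.log_pow (by norm_num)]
  · -- ω·(1+β) ≤ γ < ω·(1+β) + log₂ c
    have hγe : γ = ω * (1 + β) + (γ - ω * (1 + β)) := (Ordinal.add_sub_cancel_of_le hγβ).symm
    have he'lt : γ - ω * (1 + β) < (Nat.log 2 c : Ordinal) := by
      rw [hγe] at hγ
      exact (add_lt_add_iff_left _).mp hγ
    obtain ⟨e, he⟩ := Ordinal.lt_omega0.mp (he'lt.trans (nat_lt_omega0 _))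
    rw [he] at hγe he'lt
    have helog : e < Nat.log 2 c := by exact_mod_cast he'lt
    have hpow : 2 ^ (e + 1) ≤ c :=
      (Nat.le_log_iff_pow_le (by norm_num) (by omega)).mp helog
    have h2e2 : 2 ^ (e + 1) = 2 * 2 ^ e := by ring
    have h2epos : 0 < 2 ^ e := Nat.pow_pos (by norm_num)
    set x := ω ^ β * ((2 ^ e : ℕ) : Ordinal) with hxdef
    have hc' : (0:ℕ) < c - 2 ^ e := by omega
    have hxx : x + 1 + ω ^ β * ((c - 2 ^ e : ℕ) : Ordinal) = ω ^ β * c := by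
      have hωβ' : ω ≤ ω ^ β * ((c - 2 ^ e : ℕ) : Ordinal) := by
        calc ω ≤ ω ^ β := hωβ
        _ = ω ^ β * 1 := (mul_one _).symm
        _ ≤ _ := mul_le_mul_right (by exact_mod_cast hc') _
      rw [add_assoc, Ordinal.one_add_of_omega0_le hωβ', ← mul_add, ← Nat.cast_add]
      congr 2
      omega
    have hxc : x ≤ ω ^ β * c := by
      rw [← hxx]
      exact le_trans ((le_self_add (a := x) (b := 1))) (le_self_add)
    have hxltc : x < ω ^ β * c := by
      rw [← hxx]
      calc x < x + 1 := lt_add_one x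
      _ ≤ _ := le_self_add
    have hpA : i + x < A := lt_of_lt_of_le ((add_lt_add_iff_left i).mpr hxltc) hiA
    refine ⟨pt (i + x) hpA 0, ?_, ?_, ?_⟩
    · exact hs (mem_full_pt _ _ (le_self_add) ((add_lt_add_iff_left i).mpr hxltc))
    · -- left
      have hsub : Full A i (i + x) ⊆ {y ∈ s | y < pt (i + x) hpA 0} :=
        subset_left_cut hpA hs le_rfl ((add_le_add_iff_left i).mpr hxc) 0
      have := ihc (2 ^ e) (by omega) Nat.one_le_two_pow i hpA.le _ hsub
      refine rkGE_anti ?_ this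
      rw [hγe, Nat.log_pow (by norm_num)]
    · -- right
      have hend : (i + x + 1) + ω ^ β * ((c - 2 ^ e : ℕ) : Ordinal) ≤ A := by
        apply le_trans _ hiA
        rw [add_assoc, add_assoc]
        apply add_le_add_right
        rw [← add_assoc]
        rw [hxx]
      have hsub : Full A (i + x + 1) ((i + x + 1) + ω ^ β * ((c - 2 ^ e : ℕ) : Ordinal)) ⊆
          {y ∈ s | pt (i + x) hpA 0 < y} := by
        apply subset_right_cut hpA hs
        · exact lt_add_one _
        · calc i ≤ i + x := le_self_add
          _ ≤ _ := (lt_add_one _).le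
        · rw [add_assoc, add_assoc]
          apply add_le_add_right
          rw [← add_assoc, hxx]
      have := ihc (c - 2 ^ e) (by omega) (by omega) _ hend _ hsub
      refine rkGE_anti ?_ this
      rw [hγe]
      apply add_le_add_right
      have : 2 ^ e ≤ c - 2 ^ e := by omega
      have := (Nat.le_log_iff_pow_le (by norm_num) (by omega : c - 2 ^ e ≠ 0)).mpr this
      exact_mod_cast this

end Core

end ZRank

namespace ZRank

section Upper

variable {A : Ordinal}

noncomputable def natOf (o : Ordinal) : ℕ := o.card.toNat

theorem natOf_cast (n : ℕ) : natOf (n : Ordinal) = n := by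
  rw [natOf, Ordinal.card_nat, Cardinal.toNat_natCast]

theorem cast_natOf {o : Ordinal} (h : o < ω) : ((natOf o : ℕ) : Ordinal) = o := by
  obtain ⟨n, rfl⟩ := Ordinal.lt_omega0.mp h
  rw [natOf_cast]

noncomputable def Mfun (δ : Ordinal) : Ordinal :=
  if δ < ω then ω + (Nat.log 2 (natOf δ + 1) : Ordinal)
  else ω * (1 + log ω δ) + (Nat.log 2 (natOf (δ / ω ^ log ω δ)) : Ordinal)

theorem Mfun_nat (n : ℕ) : Mfun (n : Ordinal) = ω + (Nat.log 2 (n + 1) : Ordinal) := by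
  rw [Mfun, if_pos (nat_lt_omega0 n), natOf_cast]

theorem omega0_le_Mfun (δ : Ordinal) : ω ≤ Mfun δ := by
  rw [Mfun]
  split
  · exact le_self_add
  · calc ω = ω * 1 := (mul_one ω).symm
    _ ≤ ω * (1 + log ω δ) := mul_le_mul_right (le_self_add) ω
    _ ≤ _ := le_self_add

theorem natlog_min (k₁ k₂ : ℕ) :
    min (Nat.log 2 (k₁ + 1)) (Nat.log 2 (k₂ + 1)) < Nat.log 2 (k₁ + k₂ + 2) := by
  have main : ∀ a b : ℕ, a ≤ b → Nat.log 2 (a + 1) < Nat.log 2 (a + b + 2) := by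
    intro a b hab
    have hmul := Nat.log_mul_base (b := 2) (by norm_num) (Nat.succ_ne_zero a)
    calc Nat.log 2 (a + 1) < Nat.log 2 (a + 1) + 1 := Nat.lt_succ_self _
    _ = Nat.log 2 ((a + 1) * 2) := hmul.symm
    _ ≤ Nat.log 2 (a + b + 2) := Nat.log_mono_right (by omega)
  rcases le_total k₁ k₂ with h | h
  · exact lt_of_le_of_lt (min_le_left _ _) (main k₁ k₂ h)
  · apply lt_of_le_of_lt (min_le_right _ _)
    have := main k₂ k₁ h
    rwa [show k₂ + k₁ + 2 = k₁ + k₂ + 2 by omega] at this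

theorem Mfun_lt_of_lt_opow {B x : Ordinal} (hB : 1 ≤ B) (hx : x < ω ^ B) :
    Mfun x < ω * (1 + B) := by
  by_cases hxo : x < ω
  · rw [Mfun, if_pos hxo]
    calc ω + (Nat.log 2 (natOf x + 1) : Ordinal) < ω + ω := add_lt_add_right (nat_lt_omega0 _) ω
    _ = ω * (1 + 1) := by rw [mul_add_one, mul_one]
    _ ≤ ω * (1 + B) := mul_le_mul_right (add_le_add_right hB 1) ω
  · push_neg at hxo
    have hx0 : x ≠ 0 := (lt_of_lt_of_le omega0_pos hxo).ne'
    have hBx : log ω x < B := by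
      apply (Ordinal.opow_lt_opow_iff_right one_lt_omega0).mp
      exact lt_of_le_of_lt (Ordinal.opow_log_le_self ω hx0) hx
    rw [Mfun, if_neg (not_lt.mpr hxo)]
    calc ω * (1 + log ω x) + (Nat.log 2 (natOf (x / ω ^ log ω x)) : Ordinal)
        < ω * (1 + log ω x) + ω := add_lt_add_right (nat_lt_omega0 _) _
    _ = ω * ((1 + log ω x) + 1) := (mul_add_one ω _).symm
    _ = ω * (1 + (log ω x + 1)) := by rw [add_assoc]
    _ ≤ ω * (1 + B) := by
        apply mul_le_mul_right
        apply add_le_add_right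
        rw [Ordinal.add_one_eq_succ, Order.succ_le_iff]
        exact hBx

theorem key {δ a b : Ordinal} (h : a + 1 + b = δ) :
    Mfun a < Mfun δ ∨ Mfun b < Mfun δ := by
  have ha_le : a ≤ δ := by rw [← h, add_assoc]; exact le_self_add
  have hb_le : b ≤ δ := by rw [← h]; exact le_add_self
  by_cases hδω : δ < ω
  · obtain ⟨na, hna⟩ := Ordinal.lt_omega0.mp (lt_of_le_of_lt ha_le hδω)
    obtain ⟨nb, hnb⟩ := Ordinal.lt_omega0.mp (lt_of_le_of_lt hb_le hδω)
    obtain ⟨nδ, hnδ⟩ := Ordinal.lt_omega0.mp hδω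
    subst hna hnb hnδ
    have hsum : na + 1 + nb = nδ := by exact_mod_cast h
    rw [Mfun_nat, Mfun_nat, Mfun_nat]
    have hmin := natlog_min na nb
    rw [show na + nb + 2 = nδ + 1 by omega] at hmin
    rcases min_lt_iff.mp hmin with hlt | hlt
    · exact Or.inl (add_lt_add_right (by exact_mod_cast hlt) ω)
    · exact Or.inr (add_lt_add_right (by exact_mod_cast hlt) ω)
  · push_neg at hδω
    set B := log ω δ with hBdef
    have hδ0 : δ ≠ 0 := (lt_of_lt_of_le omega0_pos hδω).ne'
    have hB1 : 1 ≤ B := by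
      rw [hBdef, ← Ordinal.opow_le_iff_le_log one_lt_omega0 hδ0, opow_one]
      exact hδω
    have hMδbase : ω * (1 + B) ≤ Mfun δ := by
      rw [Mfun, if_neg (not_lt.mpr hδω)]
      exact le_self_add
    by_cases ha : a < ω ^ B
    · exact Or.inl (lt_of_lt_of_le (Mfun_lt_of_lt_opow hB1 ha) hMδbase)
    by_cases hb : b < ω ^ B
    · exact Or.inr (lt_of_lt_of_le (Mfun_lt_of_lt_opow hB1 hb) hMδbase)
    push_neg at ha hb
    have hδlt : δ < ω ^ (B + 1) := by
      have := Ordinal.lt_opow_succ_log_self one_lt_omega0 δ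
      rwa [← Ordinal.add_one_eq_succ] at this
    have hω0 : (ω : Ordinal) ^ B ≠ 0 := (opow_pos _ omega0_pos).ne'
    have hωB : ω ≤ ω ^ B := by
      calc ω = ω ^ (1 : Ordinal) := (opow_one ω).symm
      _ ≤ ω ^ B := opow_le_opow_right omega0_pos hB1
    have hdivlt : ∀ x : Ordinal, x ≤ δ → x / ω ^ B < ω := by
      intro x hx
      rw [Ordinal.div_lt hω0, ← opow_succ, ← Ordinal.add_one_eq_succ]
      exact lt_of_le_of_lt hx hδlt
    obtain ⟨na, hna⟩ := Ordinal.lt_omega0.mp (hdivlt a ha_le)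
    obtain ⟨nb, hnb⟩ := Ordinal.lt_omega0.mp (hdivlt b hb_le)
    obtain ⟨nC, hnC⟩ := Ordinal.lt_omega0.mp (hdivlt δ le_rfl)
    have hna1 : 1 ≤ na := by
      have : (1 : Ordinal) ≤ a / ω ^ B := (Ordinal.le_div hω0).mpr (by rwa [mul_one])
      rw [hna] at this
      exact_mod_cast this
    have hnb1 : 1 ≤ nb := by
      have : (1 : Ordinal) ≤ b / ω ^ B := (Ordinal.le_div hω0).mpr (by rwa [mul_one])
      rw [hnb] at this
      exact_mod_cast this
    have hsum : na + nb ≤ nC := by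
      have hmul : ω ^ B * (a / ω ^ B + b / ω ^ B) ≤ δ := by
        rw [mul_add]
        calc ω ^ B * (a / ω ^ B) + ω ^ B * (b / ω ^ B) ≤ a + b :=
          add_le_add (Ordinal.mul_div_le a _) (Ordinal.mul_div_le b _)
        _ ≤ a + 1 + b := add_le_add_left ((le_self_add (a := a) (b := 1))) b
        _ = δ := h
      have hdd : a / ω ^ B + b / ω ^ B ≤ δ / ω ^ B := (Ordinal.le_div hω0).mpr hmul
      rw [hna, hnb, hnC, ← Nat.cast_add] at hdd
      exact_mod_cast hdd
    have hlogval : ∀ x : Ordinal, x ≤ δ → ω ^ B ≤ x → log ω x = B := by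
      intro x h1 h2
      have hx0 : x ≠ 0 := (lt_of_lt_of_le (opow_pos _ omega0_pos) h2).ne'
      apply le_antisymm
      · rw [hBdef]
        exact Ordinal.log_mono_right _ h1
      · exact (Ordinal.opow_le_iff_le_log one_lt_omega0 hx0).mp h2
    have hωa : ¬ a < ω := not_lt.mpr (hωB.trans ha)
    have hωb : ¬ b < ω := not_lt.mpr (hωB.trans hb)
    have hMa : Mfun a = ω * (1 + B) + (Nat.log 2 na : Ordinal) := by
      rw [Mfun, if_neg hωa, hlogval a ha_le ha, hna, natOf_cast]
    have hMb : Mfun b = ω * (1 + B) + (Nat.log 2 nb : Ordinal) := by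
      rw [Mfun, if_neg hωb, hlogval b hb_le hb, hnb, natOf_cast]
    have hMδ : Mfun δ = ω * (1 + B) + (Nat.log 2 nC : Ordinal) := by
      rw [Mfun, if_neg (not_lt.mpr hδω), ← hBdef, hnC, natOf_cast]
    have hmin : min (Nat.log 2 na) (Nat.log 2 nb) < Nat.log 2 nC := by
      have h1 := natlog_min (na - 1) (nb - 1)
      rw [Nat.sub_add_cancel hna1, Nat.sub_add_cancel hnb1,
        show na - 1 + (nb - 1) + 2 = na + nb by omega] at h1
      exact lt_of_lt_of_le h1 (Nat.log_mono_right hsum)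
    rcases min_lt_iff.mp hmin with hlt | hlt
    · left; rw [hMa, hMδ]; exact add_lt_add_right (by exact_mod_cast hlt) _
    · right; rw [hMb, hMδ]; exact add_lt_add_right (by exact_mod_cast hlt) _

def ISet {Y : Type*} [LinearOrder Y] (l u : Option Y) : Set Y :=
  {y | (∀ a, l = some a → a < y) ∧ (∀ d, u = some d → y < d)}

theorem iset_none_none {Y : Type*} [LinearOrder Y] :
    (ISet (none : Option Y) none) = Set.univ := by
  ext y
  simp [ISet]

theorem cut_left {Y : Type*} [LinearOrder Y] {l u : Option Y} {c : Y} (hc : c ∈ ISet l u) :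
    {y ∈ ISet l u | y < c} = ISet l (some c) := by
  ext y
  constructor
  · rintro ⟨⟨h1, _⟩, h3⟩
    refine ⟨h1, fun d hd => ?_⟩
    injection hd with hd
    rw [← hd]
    exact h3
  · rintro ⟨h1, h2⟩
    have hyc : y < c := h2 c rfl
    exact ⟨⟨h1, fun d hd => hyc.trans (hc.2 d hd)⟩, hyc⟩

theorem cut_right {Y : Type*} [LinearOrder Y] {l u : Option Y} {c : Y} (hc : c ∈ ISet l u) :
    {y ∈ ISet l u | c < y} = ISet (some c) u := by
  ext y
  constructor
  · rintro ⟨⟨_, h2⟩, h3⟩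
    refine ⟨fun a ha => ?_, h2⟩
    injection ha with ha
    rw [← ha]
    exact h3
  · rintro ⟨h1, h2⟩
    have hyc : c < y := h1 c rfl
    exact ⟨⟨fun a ha => (hc.1 a ha).trans hyc, h2⟩, hyc⟩

noncomputable def lbO {A : Ordinal} : Option (Lex (A.ToType × ℤ)) → Ordinal
  | none => 0
  | some a => cp (ofLex a).1 + 1

noncomputable def ubO (A : Ordinal) : Option (Lex (A.ToType × ℤ)) → Ordinal
  | none => A
  | some d => cp (ofLex d).1

noncomputable def bnd (A : Ordinal) :
    Option (Lex (A.ToType × ℤ)) → Option (Lex (A.ToType × ℤ)) → Ordinal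
  | some a, some d =>
      if (ofLex a).1 = (ofLex d).1 then
        ((Nat.log 2 (((ofLex d).2 - (ofLex a).2 - 1).toNat + 1) : ℕ) : Ordinal)
      else Mfun (cp (ofLex d).1 - (cp (ofLex a).1 + 1))
  | some a, none => Mfun (A - (cp (ofLex a).1 + 1))
  | none, some d => Mfun (cp (ofLex d).1)
  | none, none => Mfun A

theorem bnd_spanning {l u : Option (Lex (A.ToType × ℤ))}
    (h : ∀ a d, l = some a → u = some d → (ofLex a).1 ≠ (ofLex d).1) :
    bnd A l u = Mfun (ubO A u - lbO l) := by
  match l, u with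
  | none, none => rw [bnd, ubO, lbO, Ordinal.sub_zero]
  | none, some d => rw [bnd, ubO, lbO, Ordinal.sub_zero]
  | some a, none => rw [bnd, ubO, lbO]
  | some a, some d => rw [bnd, if_neg (h a d rfl rfl), ubO, lbO]

theorem sub_split {x y z : Ordinal} (h1 : x ≤ y) (h2 : y + 1 ≤ z) :
    (y - x) + 1 + (z - (y + 1)) = z - x := by
  have e1 : x + (y - x) = y := Ordinal.add_sub_cancel_of_le h1
  have e2 : (y + 1) + (z - (y + 1)) = z := Ordinal.add_sub_cancel_of_le h2
  have e3 : z = x + ((y - x) + 1 + (z - (y + 1))) := by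
    rw [← add_assoc, ← add_assoc, e1, e2]
  conv_rhs => rw [e3]
  rw [Ordinal.add_sub_cancel]

end Upper

end ZRank

namespace ZRank

section DecUb

variable {A : Ordinal}

theorem bnd_some_some (a d : Lex (A.ToType × ℤ)) :
    bnd A (some a) (some d) =
      if (ofLex a).1 = (ofLex d).1 then
        ((Nat.log 2 (((ofLex d).2 - (ofLex a).2 - 1).toNat + 1) : ℕ) : Ordinal)
      else Mfun (cp (ofLex d).1 - (cp (ofLex a).1 + 1)) := rfl

theorem fst_le_of_lt {a c : Lex (A.ToType × ℤ)} (h : a < c) : (ofLex a).1 ≤ (ofLex c).1 := by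
  rcases lex_lt_iff.mp h with h | h
  · exact h.le
  · exact h.1.le

theorem fst_lt_of_lt_ne {a c : Lex (A.ToType × ℤ)} (h : a < c)
    (hne : (ofLex a).1 ≠ (ofLex c).1) : (ofLex a).1 < (ofLex c).1 := by
  rcases lex_lt_iff.mp h with h | h
  · exact h
  · exact absurd h.1 hne

theorem dec {l u : Option (Lex (A.ToType × ℤ))} {c : Lex (A.ToType × ℤ)}
    (hc : c ∈ ISet l u) :
    bnd A l (some c) < bnd A l u ∨ bnd A (some c) u < bnd A l u := by
  classical
  by_cases hSC : ∃ a d, l = some a ∧ u = some d ∧ (ofLex a).1 = (ofLex d).1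
  · obtain ⟨a, d, rfl, rfl, had⟩ := hSC
    have hac : a < c := hc.1 a rfl
    have hcd : c < d := hc.2 d rfl
    have hpc : (ofLex a).1 = (ofLex c).1 :=
      le_antisymm (fst_le_of_lt hac) (had ▸ fst_le_of_lt hcd)
    have hpc2 : (ofLex c).1 = (ofLex d).1 := hpc ▸ had
    have hza : (ofLex a).2 < (ofLex c).2 := by
      rcases lex_lt_iff.mp hac with h | h
      · rw [hpc] at h; exact absurd h (lt_irrefl _)
      · exact h.2
    have hzc : (ofLex c).2 < (ofLex d).2 := by
      rcases lex_lt_iff.mp hcd with h | h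
      · rw [hpc2] at h; exact absurd h (lt_irrefl _)
      · exact h.2
    rw [bnd_some_some, bnd_some_some, bnd_some_some, if_pos had, if_pos hpc, if_pos hpc2]
    have hmin := natlog_min ((ofLex c).2 - (ofLex a).2 - 1).toNat
      ((ofLex d).2 - (ofLex c).2 - 1).toNat
    rw [show ((ofLex c).2 - (ofLex a).2 - 1).toNat + ((ofLex d).2 - (ofLex c).2 - 1).toNat + 2
        = ((ofLex d).2 - (ofLex a).2 - 1).toNat + 1 by omega] at hmin
    rcases min_lt_iff.mp hmin with h | h
    · exact Or.inl (by exact_mod_cast h)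
    · exact Or.inr (by exact_mod_cast h)
  · have hlu : ∀ a d, l = some a → u = some d → (ofLex a).1 ≠ (ofLex d).1 :=
      fun a d ha hd heq => hSC ⟨a, d, ha, hd, heq⟩
    rw [bnd_spanning hlu]
    by_cases hl : ∃ a, l = some a ∧ (ofLex a).1 = (ofLex c).1
    · obtain ⟨a, rfl, hac⟩ := hl
      left
      rw [bnd_some_some, if_pos hac]
      exact lt_of_lt_of_le (nat_lt_omega0 _) (omega0_le_Mfun _)
    by_cases hu : ∃ d, u = some d ∧ (ofLex c).1 = (ofLex d).1
    · obtain ⟨d, rfl, hcd⟩ := hu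
      right
      rw [bnd_some_some, if_pos hcd]
      exact lt_of_lt_of_le (nat_lt_omega0 _) (omega0_le_Mfun _)
    · push_neg at hl hu
      have hbl : bnd A l (some c) = Mfun (cp (ofLex c).1 - lbO l) := by
        have := bnd_spanning (A := A) (l := l) (u := some c) (fun a d ha hd => by
          injection hd with hd
          subst hd
          exact hl a ha)
        rw [this]
        rfl
      have hbr : bnd A (some c) u = Mfun (ubO A u - (cp (ofLex c).1 + 1)) := by
        have := bnd_spanning (A := A) (l := some c) (u := u) (fun a d ha hd => by
          injection ha with ha
          subst ha
          exact fun heq => hu d hd heq)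
        rw [this]
        rfl
      have h1 : lbO l ≤ cp (ofLex c).1 := by
        match l with
        | none => exact zero_le
        | some a =>
          have hac : a < c := hc.1 a rfl
          have : cp (ofLex a).1 < cp (ofLex c).1 :=
            cp_lt_cp.mpr (fst_lt_of_lt_ne hac (hl a rfl))
          rw [lbO, Ordinal.add_one_eq_succ, Order.succ_le_iff]
          exact this
      have h2 : cp (ofLex c).1 + 1 ≤ ubO A u := by
        match u with
        | none =>
          rw [ubO, Ordinal.add_one_eq_succ, Order.succ_le_iff]
          exact cp_lt _
        | some d =>
          have hcd : c < d := hc.2 d rfl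
          have : cp (ofLex c).1 < cp (ofLex d).1 :=
            cp_lt_cp.mpr (fst_lt_of_lt_ne hcd (hu d rfl))
          rw [ubO, Ordinal.add_one_eq_succ, Order.succ_le_iff]
          exact this
      rw [hbl, hbr]
      exact key (sub_split h1 h2)

theorem ub : ∀ ν : Ordinal, ∀ l u : Option (Lex (A.ToType × ℤ)),
    RkGE ν (ISet l u) → ν ≤ bnd A l u := by
  intro ν
  induction ν using Ordinal.induction with
  | h ν ih =>
  intro l u h
  by_contra hlt
  push_neg at hlt
  rw [rkGE_iff] at h
  obtain ⟨c, hc, h1, h2⟩ := h (bnd A l u) hlt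
  rw [cut_left hc] at h1
  rw [cut_right hc] at h2
  have H1 := ih _ hlt l (some c) h1
  have H2 := ih _ hlt (some c) u h2
  rcases dec hc with hd | hd
  · exact absurd (lt_of_le_of_lt H1 hd) (lt_irrefl _)
  · exact absurd (lt_of_le_of_lt H2 hd) (lt_irrefl _)

end DecUb

end ZRank


/-- **Theorem 5.23**: for a countable ordinal `α ≥ ω` with Cantor normal form leading term
`ω^β₁ · c₁` (so `α = ω^β₁ · c₁ + ρ`, `ρ < ω^β₁`, `1 ≤ c₁ < ω`),
`rk(ℤ · α) = ω·(1 + β₁) + ⌊log₂ c₁⌋`, where `ℤ · α` is the lexicographic order on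
`α × ℤ` (`α` consecutive copies of `ℤ`). -/
theorem rank_int_mul_ordinal {α β₁ ρ : Ordinal} {c₁ : ℕ}
    (hα : ω ≤ α) (hcnt : α.card ≤ Cardinal.aleph0) (hc : 1 ≤ c₁)
    (hform : α = ω ^ β₁ * c₁ + ρ) (hρ : ρ < ω ^ β₁) :
    RkGE (ω * (1 + β₁) + Nat.log 2 c₁) (Set.univ : Set (Lex (α.ToType × ℤ))) ∧
    ¬ RkGE (ω * (1 + β₁) + Nat.log 2 c₁ + 1) (Set.univ : Set (Lex (α.ToType × ℤ))) := by
  have hβ₁ : 1 ≤ β₁ := by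
    by_contra hβ
    push_neg at hβ
    rw [Ordinal.lt_one_iff_zero] at hβ
    subst hβ
    rw [opow_zero] at hρ
    rw [Ordinal.lt_one_iff_zero] at hρ
    rw [opow_zero, one_mul, hρ, add_zero] at hform
    rw [hform] at hα
    exact absurd hα (nat_lt_omega0 c₁).not_ge
  constructor
  · have h0 : (0 : Ordinal) + ω ^ β₁ * c₁ ≤ α := by
      rw [zero_add, hform]
      exact le_self_add
    exact ZRank.core β₁ hβ₁ c₁ hc 0 h0 Set.univ (Set.subset_univ _)
  · intro hR
    have hA0 : α ≠ 0 := (lt_of_lt_of_le omega0_pos hα).ne'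
    have hop0 : (ω : Ordinal) ^ β₁ ≠ 0 := (opow_pos _ omega0_pos).ne'
    have hlog : log ω α = β₁ := by
      apply le_antisymm
      · have hcω : ((c₁ : Ordinal) + 1) ≤ ω := by
          have := (nat_lt_omega0 (c₁ + 1)).le
          push_cast at this
          exact this
        have h2 : α < ω ^ (β₁ + 1) := by
          rw [hform]
          calc ω ^ β₁ * c₁ + ρ < ω ^ β₁ * c₁ + ω ^ β₁ := add_lt_add_right hρ _
          _ = ω ^ β₁ * ((c₁ : Ordinal) + 1) := (mul_add_one _ _).symm
          _ ≤ ω ^ β₁ * ω := mul_le_mul_right hcω _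
          _ = ω ^ (β₁ + 1) := (opow_succ ω β₁).symm
        have := (Ordinal.lt_opow_iff_log_lt one_lt_omega0 hA0).mp h2
        rwa [Ordinal.add_one_eq_succ, Order.lt_succ_iff] at this
      · apply (Ordinal.opow_le_iff_le_log one_lt_omega0 hA0).mp
        rw [hform]
        calc ω ^ β₁ = ω ^ β₁ * 1 := (mul_one _).symm
        _ ≤ ω ^ β₁ * c₁ := mul_le_mul_right (by exact_mod_cast hc) _
        _ ≤ _ := le_self_add
    have hdiv : α / ω ^ β₁ = (c₁ : Ordinal) := by
      rw [hform, Ordinal.mul_add_div _ hop0, Ordinal.div_eq_zero_of_lt hρ, add_zero]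
    have hMα : ZRank.Mfun α = ω * (1 + β₁) + (Nat.log 2 c₁ : Ordinal) := by
      rw [ZRank.Mfun, if_neg (not_lt.mpr hα), hlog, hdiv, ZRank.natOf_cast]
    have hu := ZRank.ub (A := α) (ω * (1 + β₁) + (Nat.log 2 c₁ : Ordinal) + 1) none none
      (by rw [ZRank.iset_none_none]; exact hR)
    have hbnd : ZRank.bnd α none none = ZRank.Mfun α := rfl
    rw [hbnd, hMα] at hu
    exact absurd hu (lt_add_one _).not_ge
end
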